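/- arXiv:1701.08504 — 10 statements merged into one kernel-verified Lean document; each statement's English description precedes it below -/
import Mathlib

section
/- Let f : ℕ → ℕ be a multiplicative function (f(1) = 1 and f(ab) = f(a)f(b) whenever gcd(a,b) = 1) satisfying f(p^{k-1}) ≤ f(p^k) for every prime p and integer k ≥ 1. If n > 1 is weakly f-practical and p is a prime with f(p) ≤ f(q) for some prime q dividing n, then pn is also weakly f-practical. -/
/-!
Since `f` takes values in `ℕ`, `Sf f` is monotone along divisibility, so raising exponents or
inserting extra primes into the prefix products only weakens the defining inequalities. If
`p ∣ n`, the ordering of the primes of `n` therefore works for `p * n`. Otherwise insert `p` into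
that ordering just before the first prime `x` with `f p ≤ f x` (one exists, `q` being such a
prime): the inequality for `p` is inherited from the one for `x`, and every later prime sees a
prefix product multiplied by `p`.
-/

open Finset

def Sf (f : ℕ → ℕ) (n : ℕ) : ℕ := ∑ d ∈ n.divisors, f d

def FPractical (f : ℕ → ℕ) (n : ℕ) : Prop :=
  0 < n ∧ ∀ m : ℕ, 0 < m → m ≤ Sf f n →
    ∃ D : Finset ℕ, D ⊆ n.divisors ∧ m = ∑ d ∈ D, f d

def WeaklyFPractical (f : ℕ → ℕ) (n : ℕ) : Prop :=
  0 < n ∧ ∃ l : List ℕ,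
    l.Nodup ∧
    l.toFinset = n.primeFactors ∧
    l.Pairwise (fun p q => f p ≤ f q) ∧
    ∀ i : Fin l.length,
      f (l.get i) ≤ Sf f (((l.take i).map fun p => p ^ n.factorization p).prod) + 1

theorem Sf_le_Sf_of_dvd (f : ℕ → ℕ) {a b : ℕ} (h : a ∣ b) (hb : b ≠ 0) : Sf f a ≤ Sf f b :=
  Finset.sum_le_sum_of_subset (Nat.divisors_subset_of_dvd hb h)

def powProd (e : ℕ → ℕ) (l : List ℕ) : ℕ := (l.map fun p => p ^ e p).prod

theorem powProd_pos {e : ℕ → ℕ} {l : List ℕ} (hl : ∀ r ∈ l, 0 < r) : 0 < powProd e l :=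
  List.prod_pos fun _ h => by
    obtain ⟨r, hr, rfl⟩ := List.mem_map.mp h
    exact pow_pos (hl r hr) _

theorem powProd_dvd_powProd {e e' : ℕ → ℕ} {l₁ l₂ : List ℕ} (hl : l₁.Sublist l₂)
    (he : ∀ r, e r ≤ e' r) : powProd e l₁ ∣ powProd e' l₂ := by
  have hexp : powProd e l₁ ∣ powProd e' l₁ := by
    simpa [powProd] using Multiset.prod_dvd_prod_of_dvd (S := (l₁ : Multiset ℕ)) _ _
      fun r _ => pow_dvd_pow r (he r)
  exact hexp.trans (hl.map _).prod_dvd_prod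

/-- The inequalities defining weak `f`-practicality, indexed by splittings `l = l₁ ++ r :: l₂`
rather than by positions. -/
def PrefixBound (f e : ℕ → ℕ) (l : List ℕ) : Prop :=
  ∀ l₁ r l₂, l = l₁ ++ r :: l₂ → f r ≤ Sf f (powProd e l₁) + 1

theorem forall_get_le_iff_prefixBound (f e : ℕ → ℕ) (l : List ℕ) :
    (∀ i : Fin l.length, f (l.get i) ≤ Sf f (((l.take i).map fun p => p ^ e p).prod) + 1) ↔
      PrefixBound f e l := by
  constructor
  · rintro h l₁ r l₂ rfl
    simpa [powProd] using h ⟨l₁.length, by simp⟩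
  · intro h i
    refine h _ _ (l.drop (i + 1)) ?_
    simp

theorem weaklyFPractical_iff (f : ℕ → ℕ) (n : ℕ) :
    WeaklyFPractical f n ↔ 0 < n ∧ ∃ l : List ℕ, l.Nodup ∧ l.toFinset = n.primeFactors ∧
      l.Pairwise (fun p q => f p ≤ f q) ∧ PrefixBound f n.factorization l := by
  simp only [WeaklyFPractical, forall_get_le_iff_prefixBound]

theorem PrefixBound.of_dominated {f e e' : ℕ → ℕ} {L L' : List ℕ} (h : PrefixBound f e L)
    (hpos : ∀ r ∈ L', 0 < r) (he : ∀ r, e r ≤ e' r)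
    (hdom : ∀ l₁ r l₂, L' = l₁ ++ r :: l₂ →
      ∃ l₀ r₀ l₂', L = l₀ ++ r₀ :: l₂' ∧ l₀.Sublist l₁ ∧ f r ≤ f r₀) :
    PrefixBound f e' L' := by
  intro l₁ r l₂ hsplit
  obtain ⟨l₀, r₀, l₂', hsplit₀, hsub, hr⟩ := hdom l₁ r l₂ hsplit
  have hpos₁ : 0 < powProd e' l₁ :=
    powProd_pos fun s hs => hpos s (by simp [hsplit, hs])
  calc f r ≤ f r₀ := hr
    _ ≤ Sf f (powProd e l₀) + 1 := h l₀ r₀ l₂' hsplit₀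
    _ ≤ Sf f (powProd e' l₁) + 1 := by
      gcongr
      exact Sf_le_Sf_of_dvd f (powProd_dvd_powProd hsub he) hpos₁.ne'

theorem PrefixBound.mono {f e e' : ℕ → ℕ} {L : List ℕ} (h : PrefixBound f e L)
    (hpos : ∀ r ∈ L, 0 < r) (he : ∀ r, e r ≤ e' r) : PrefixBound f e' L :=
  h.of_dominated hpos he fun l₁ r l₂ hsplit => ⟨l₁, r, l₂, hsplit, .refl _, le_rfl⟩

theorem PrefixBound.insert {f e e' : ℕ → ℕ} {t d : List ℕ} {p x : ℕ}
    (h : PrefixBound f e (t ++ x :: d)) (hpos : ∀ r ∈ t ++ p :: x :: d, 0 < r)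
    (he : ∀ r, e r ≤ e' r) (hpx : f p ≤ f x) : PrefixBound f e' (t ++ p :: x :: d) := by
  refine h.of_dominated hpos he fun l₁ r l₂ hsplit => ?_
  rcases List.append_eq_append_iff.mp hsplit with ⟨a, rfl, ha⟩ | ⟨c, rfl, hc⟩
  · rcases List.cons_eq_append_iff.mp ha with ⟨rfl, hr⟩ | ⟨a, rfl, ha'⟩
    · obtain ⟨rfl, rfl⟩ := List.cons_eq_cons.mp hr
      exact ⟨t, x, d, rfl, by simp, hpx⟩
    · exact ⟨t ++ a, r, l₂, by simp [ha'], by simp, le_rfl⟩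
  · rcases List.cons_eq_append_iff.mp hc with ⟨rfl, hr⟩ | ⟨c, rfl, hc⟩
    · obtain ⟨rfl, rfl⟩ := List.cons_eq_cons.mp hr
      exact ⟨l₁, x, d, by simp, .refl _, hpx⟩
    · exact ⟨l₁, r, c ++ x :: d, by simp, .refl _, le_rfl⟩

theorem List.exists_eq_append_of_pairwise_le {α β : Type*} [LinearOrder β] {g : α → β}
    {l : List α} (hl : l.Pairwise (fun a b => g a ≤ g b)) (b : β) :
    ∃ t d, l = t ++ d ∧ (∀ r ∈ t, g r < b) ∧ ∀ r ∈ d, b ≤ g r := by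
  induction l with
  | nil => exact ⟨[], [], rfl, by simp, by simp⟩
  | cons a l ih =>
    obtain ⟨ha, hl⟩ := List.pairwise_cons.mp hl
    by_cases hab : g a < b
    · obtain ⟨t, d, rfl, ht, hd⟩ := ih hl
      exact ⟨a :: t, d, rfl, by simpa [hab] using ht, hd⟩
    · have hab : b ≤ g a := not_lt.mp hab
      exact ⟨[], a :: l, rfl, by simp, by simpa [hab] using fun r hr => hab.trans (ha r hr)⟩

theorem List.pairwise_append_cons_of_le {α β : Type*} [Preorder β] {g : α → β} {t d : List α}
    {p : α} (hl : (t ++ d).Pairwise (fun a b => g a ≤ g b)) (ht : ∀ r ∈ t, g r ≤ g p)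
    (hd : ∀ r ∈ d, g p ≤ g r) : (t ++ p :: d).Pairwise (fun a b => g a ≤ g b) := by
  simp only [List.pairwise_append, List.pairwise_cons, List.mem_cons] at hl ⊢
  refine ⟨hl.1, ⟨hd, hl.2.1⟩, fun a ha b hb => ?_⟩
  rcases hb with rfl | hb
  · exact ht a ha
  · exact hl.2.2 a ha b hb

theorem stmt2_general (f : ℕ → ℕ)
    (n p q : ℕ) (hp : p.Prime) (hq : q.Prime) (hqn : q ∣ n)
    (hfpq : f p ≤ f q) (hweak : WeaklyFPractical f n) :
    WeaklyFPractical f (p * n) := by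
  rw [weaklyFPractical_iff] at hweak ⊢
  obtain ⟨hn0, l, hnd, htf, hsort, hbound⟩ := hweak
  have hpn0 : 0 < p * n := Nat.mul_pos hp.pos hn0
  have hmem : ∀ r, r ∈ l ↔ r ∈ n.primeFactors := fun r => by rw [← htf, List.mem_toFinset]
  have hpos : ∀ r ∈ l, 0 < r := fun r hr => (Nat.prime_of_mem_primeFactors ((hmem r).1 hr)).pos
  have he : ∀ r, n.factorization r ≤ (p * n).factorization r :=
    (Nat.factorization_le_iff_dvd hn0.ne' hpn0.ne').2 (dvd_mul_left n p)
  have hfac : (p * n).primeFactors = insert p n.primeFactors := by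
    rw [Nat.primeFactors_mul hp.ne_zero hn0.ne', hp.primeFactors, Finset.insert_eq]
  refine ⟨hpn0, ?_⟩
  by_cases hpn : p ∣ n
  · rw [hfac, Finset.insert_eq_of_mem (Nat.mem_primeFactors.2 ⟨hp, hpn, hn0.ne'⟩)]
    exact ⟨l, hnd, htf, hsort, hbound.mono hpos he⟩
  obtain ⟨t, d, rfl, ht, hd⟩ := List.exists_eq_append_of_pairwise_le hsort (f p)
  have hqd : q ∈ d := by
    have hql : q ∈ t ++ d := (hmem q).2 (Nat.mem_primeFactors.2 ⟨hq, hqn, hn0.ne'⟩)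
    exact (List.mem_append.1 hql).resolve_left fun hqt => (ht q hqt).not_ge hfpq
  obtain ⟨x, d, rfl⟩ := List.exists_cons_of_ne_nil (List.ne_nil_of_mem hqd)
  have hpl : p ∉ t ++ x :: d := fun h => hpn (Nat.dvd_of_mem_primeFactors ((hmem p).1 h))
  have hperm : (t ++ p :: x :: d).Perm (p :: (t ++ x :: d)) := List.perm_middle
  refine ⟨t ++ p :: x :: d, hperm.nodup_iff.2 (List.nodup_cons.2 ⟨hpl, hnd⟩), ?_,
    List.pairwise_append_cons_of_le hsort (fun r hr => (ht r hr).le) hd, ?_⟩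
  · rw [List.toFinset_eq_of_perm _ _ hperm, List.toFinset_cons, htf, hfac]
  · refine hbound.insert (fun r hr => ?_) he (hd x List.mem_cons_self)
    rcases List.mem_cons.1 (hperm.mem_iff.1 hr) with rfl | hr
    exacts [hp.pos, hpos r hr]

/-- If n > 1 is weakly f-practical and p is a prime with f p ≤ f q for some prime q ∣ n,
then p * n is weakly f-practical. -/
theorem stmt2 (f : ℕ → ℕ) (hf1 : f 1 = 1)
    (hmul : ∀ a b : ℕ, Nat.Coprime a b → f (a * b) = f a * f b)
    (hmono : ∀ p k : ℕ, p.Prime → 1 ≤ k → f (p ^ (k - 1)) ≤ f (p ^ k))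
    (n p q : ℕ) (hn : 1 < n) (hp : p.Prime) (hq : q.Prime) (hqn : q ∣ n)
    (hfpq : f p ≤ f q) (hweak : WeaklyFPractical f n) :
    WeaklyFPractical f (p * n) :=
  stmt2_general f n p q hp hq hqn hfpq hweak
end

section
/- Let f : ℕ → ℕ be a multiplicative function (f(1) = 1 and f(ab) = f(a)f(b) whenever gcd(a,b) = 1) satisfying f(p^{k-1}) ≤ f(p^k) for every prime p and integer k ≥ 1. Let n be f-practical and let p be a prime with gcd(p, n) = 1. Then for any positive integer k, the number np^k is f-practical if and only if f(p^i) ≤ S_f(np^{i-1}) + 1 holds for all 1 ≤ i ≤ k. -/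
open Finset

/-! Write `N = n p^j`. Since `S_f` is multiplicative, `S_f(n p^(j+1)) = S_f(N) + f(p^(j+1)) S_f(n)`.
If `N` and `n` are `f`-practical and `f(p^(j+1)) ≤ S_f(N) + 1`, every `m ≤ S_f(n p^(j+1))` can be
written as `r + f(p^(j+1)) x` with `r ≤ S_f(N)` and `x ≤ S_f(n)`: represent `r` by divisors of `N`
and `x` by divisors `u` of `n`, and use the divisors `u p^(j+1)` for the second part. Conversely,
`S_f(n p^(i-1)) + 1` can only be represented using a divisor `d` with `p^i ∣ d`, and
`f(p^i) ≤ f(d)` by monotonicity on prime powers. -/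

section Multiplicative

variable {f : ℕ → ℕ}

theorem Sf_mul_of_coprime (hmul : ∀ a b : ℕ, Nat.Coprime a b → f (a * b) = f a * f b)
    {a b : ℕ} (hab : Nat.Coprime a b) : Sf f (a * b) = Sf f a * Sf f b := by
  rw [Sf, Nat.divisors_mul, mul_def, sum_image hab.mul_injOn_divisors, sum_product, Sf, Sf,
    sum_mul_sum]
  refine sum_congr rfl fun x hx => sum_congr rfl fun y hy => hmul x y ?_
  exact (hab.coprime_dvd_left (Nat.dvd_of_mem_divisors hx)).coprime_dvd_right
    (Nat.dvd_of_mem_divisors hy)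

theorem Sf_mul_prime_pow_succ (hmul : ∀ a b : ℕ, Nat.Coprime a b → f (a * b) = f a * f b)
    {n p : ℕ} (hp : p.Prime) (hcop : Nat.Coprime p n) (j : ℕ) :
    Sf f (n * p ^ (j + 1)) = Sf f (n * p ^ j) + Sf f n * f (p ^ (j + 1)) := by
  rw [Sf_mul_of_coprime hmul (hcop.symm.pow_right _),
    Sf_mul_of_coprime hmul (hcop.symm.pow_right _)]
  simp only [Sf, Nat.sum_divisors_prime_pow hp, sum_range_succ _ (j + 1)]
  ring

theorem monotone_apply_prime_pow
    (hmono : ∀ p k : ℕ, p.Prime → 1 ≤ k → f (p ^ (k - 1)) ≤ f (p ^ k)) {p : ℕ} (hp : p.Prime) :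
    Monotone fun i => f (p ^ i) :=
  monotone_nat_of_le_succ fun i => by simpa using hmono p (i + 1) hp (by omega)

theorem apply_pos (hf1 : f 1 = 1) (hmul : ∀ a b : ℕ, Nat.Coprime a b → f (a * b) = f a * f b)
    (hmono : ∀ p k : ℕ, p.Prime → 1 ≤ k → f (p ^ (k - 1)) ≤ f (p ^ k)) {e : ℕ} (he : 0 < e) :
    0 < f e := by
  induction e using Nat.recOnPosPrimePosCoprime with
  | prime_pow p k hp _ =>
    have := monotone_apply_prime_pow hmono hp (Nat.zero_le k)
    simp only [pow_zero, hf1] at this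
    omega
  | zero => omega
  | one => omega
  | coprime a b ha hb hab iha ihb =>
    rw [hmul a b hab]
    exact Nat.mul_pos (iha (by omega)) (ihb (by omega))

theorem apply_prime_pow_le_of_dvd (hmul : ∀ a b : ℕ, Nat.Coprime a b → f (a * b) = f a * f b)
    (hpos : ∀ e, 0 < e → 0 < f e) {p : ℕ} (hmono : Monotone fun i => f (p ^ i)) (hp : p.Prime)
    {i d : ℕ} (hd : d ≠ 0) (hpd : p ^ i ∣ d) : f (p ^ i) ≤ f d := by
  have hi : i ≤ d.factorization p := (hp.pow_dvd_iff_le_factorization hd).mp hpd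
  calc f (p ^ i) ≤ f (p ^ d.factorization p) := hmono hi
    _ ≤ f (p ^ d.factorization p) * f (d / p ^ d.factorization p) :=
      Nat.le_mul_of_pos_right _ (hpos _ (Nat.ordCompl_pos p hd))
    _ = f d := by
      rw [← hmul _ _ ((Nat.coprime_ordCompl hp hd).pow_left _), Nat.ordProj_mul_ordCompl_eq_self]

theorem sum_image_mul_of_coprime (hmul : ∀ a b : ℕ, Nat.Coprime a b → f (a * b) = f a * f b)
    {n q : ℕ} (hq : 0 < q) (hcop : Nat.Coprime q n) {S : Finset ℕ} (hS : S ⊆ n.divisors) :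
    ∑ d ∈ S.image (· * q), f d = (∑ d ∈ S, f d) * f q := by
  rw [sum_image fun u _ v _ h => Nat.eq_of_mul_eq_mul_right hq h, sum_mul]
  exact sum_congr rfl fun u hu =>
    hmul u q (hcop.coprime_dvd_right (Nat.dvd_of_mem_divisors (hS hu))).symm

theorem Sf_lt_of_dvd_of_lt (hpos : ∀ e, 0 < e → 0 < f e) {N M : ℕ} (hM : M ≠ 0) (hNM : N ∣ M)
    (hlt : N < M) : Sf f N < Sf f M :=
  sum_lt_sum_of_subset (Nat.divisors_subset_of_dvd hM hNM) (Nat.mem_divisors_self M hM)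
    (fun h => absurd (Nat.divisor_le h) (not_le.mpr hlt)) (hpos M (Nat.pos_of_ne_zero hM))
    fun _ _ _ => Nat.zero_le _

end Multiplicative

section Divisibility

variable {n p : ℕ}

theorem dvd_mul_prime_pow_of_not_dvd (hp : p.Prime) {d k j : ℕ} (hd : d ∣ n * p ^ k)
    (hpd : ¬ p ^ (j + 1) ∣ d) : d ∣ n * p ^ j := by
  have hd0 : d ≠ 0 := by rintro rfl; exact hpd (dvd_zero _)
  have hj : d.factorization p ≤ j := by
    by_contra h
    exact hpd ((hp.pow_dvd_iff_le_factorization hd0).mpr (by omega))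
  have hcompl : d / p ^ d.factorization p ∣ n :=
    ((Nat.coprime_ordCompl hp hd0).symm.pow_right k).dvd_of_dvd_mul_right
      ((Nat.ordCompl_dvd d p).trans hd)
  rw [← Nat.ordProj_mul_ordCompl_eq_self d p, mul_comm n]
  exact mul_dvd_mul (pow_dvd_pow p hj) hcompl

theorem not_prime_pow_succ_dvd_of_dvd (hp : p.Prime) (hcop : Nat.Coprime p n) {d j : ℕ}
    (hd : d ∣ n * p ^ j) : ¬ p ^ (j + 1) ∣ d := fun hpd => by
  have : p ^ j * p ∣ p ^ j * n := by rw [← pow_succ, mul_comm]; exact hpd.trans hd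
  exact hp.coprime_iff_not_dvd.mp hcop (Nat.dvd_of_mul_dvd_mul_left (pow_pos hp.pos j) this)

end Divisibility

theorem exists_eq_add_mul_of_le {A B F m : ℕ} (hF : F ≤ A + 1) (hm : m ≤ A + F * B) :
    ∃ r ≤ A, ∃ x ≤ B, m = r + F * x := by
  by_cases hB : F * B ≤ m
  · exact ⟨m - F * B, by omega, B, le_rfl, by omega⟩
  · have hF0 : 0 < F := Nat.pos_of_ne_zero (by rintro rfl; omega)
    refine ⟨m % F, by have := Nat.mod_lt m hF0; omega, m / F, ?_, (Nat.mod_add_div m F).symm⟩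
    exact ((Nat.div_lt_iff_lt_mul hF0).mpr (by rw [mul_comm]; omega)).le

theorem FPractical.exists_subset_divisors {f : ℕ → ℕ} {n m : ℕ} (hn : FPractical f n)
    (hm : m ≤ Sf f n) : ∃ D ⊆ n.divisors, m = ∑ d ∈ D, f d := by
  rcases Nat.eq_zero_or_pos m with rfl | hm0
  · exact ⟨∅, empty_subset _, rfl⟩
  · exact hn.2 m hm0 hm

section Construction

variable {f : ℕ → ℕ} {n p : ℕ}

theorem FPractical.mul_prime_pow_succ (hmul : ∀ a b : ℕ, Nat.Coprime a b → f (a * b) = f a * f b)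
    (hp : p.Prime) (hcop : Nat.Coprime p n) {j : ℕ} (hn : FPractical f n)
    (hN : FPractical f (n * p ^ j)) (hle : f (p ^ (j + 1)) ≤ Sf f (n * p ^ j) + 1) :
    FPractical f (n * p ^ (j + 1)) := by
  have hne : n * p ^ (j + 1) ≠ 0 := (Nat.mul_pos hn.1 (pow_pos hp.pos _)).ne'
  refine ⟨Nat.pos_of_ne_zero hne, fun m _ hm => ?_⟩
  rw [Sf_mul_prime_pow_succ hmul hp hcop, mul_comm (Sf f n)] at hm
  obtain ⟨r, hr, x, hx, rfl⟩ := exists_eq_add_mul_of_le hle hm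
  obtain ⟨R, hR, rfl⟩ := hN.exists_subset_divisors hr
  obtain ⟨S, hS, rfl⟩ := hn.exists_subset_divisors hx
  have hRsub : R ⊆ (n * p ^ (j + 1)).divisors :=
    hR.trans (Nat.divisors_subset_of_dvd hne (mul_dvd_mul_left n (pow_dvd_pow p j.le_succ)))
  have hSsub : S.image (· * p ^ (j + 1)) ⊆ (n * p ^ (j + 1)).divisors := by
    intro d hd
    obtain ⟨u, hu, rfl⟩ := mem_image.mp hd
    exact Nat.mem_divisors.mpr ⟨mul_dvd_mul (Nat.dvd_of_mem_divisors (hS hu)) dvd_rfl, hne⟩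
  have hdisj : Disjoint R (S.image (· * p ^ (j + 1))) := by
    refine disjoint_right.mpr fun d hd hdR => ?_
    obtain ⟨u, -, rfl⟩ := mem_image.mp hd
    exact not_prime_pow_succ_dvd_of_dvd hp hcop (Nat.dvd_of_mem_divisors (hR hdR))
      (dvd_mul_left _ _)
  refine ⟨R ∪ S.image (· * p ^ (j + 1)), union_subset hRsub hSsub, ?_⟩
  rw [sum_union hdisj, sum_image_mul_of_coprime hmul (pow_pos hp.pos _) (hcop.pow_left _) hS,
    mul_comm]

theorem FPractical.apply_prime_pow_succ_le
    (hmul : ∀ a b : ℕ, Nat.Coprime a b → f (a * b) = f a * f b) (hpos : ∀ e, 0 < e → 0 < f e)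
    (hmono : Monotone fun i => f (p ^ i)) (hp : p.Prime) {j k : ℕ} (h : FPractical f (n * p ^ k))
    (hjk : j < k) : f (p ^ (j + 1)) ≤ Sf f (n * p ^ j) + 1 := by
  have hn : 0 < n := Nat.pos_of_mul_pos_right h.1
  have hN : 0 < n * p ^ j := Nat.mul_pos hn (pow_pos hp.pos j)
  have hlt : Sf f (n * p ^ j) < Sf f (n * p ^ k) :=
    Sf_lt_of_dvd_of_lt hpos h.1.ne' (mul_dvd_mul_left n (pow_dvd_pow p hjk.le))
      (Nat.mul_lt_mul_of_pos_left (Nat.pow_lt_pow_right hp.one_lt hjk) hn)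
  obtain ⟨D, hD, hsum⟩ := h.exists_subset_divisors hlt
  obtain ⟨d, hdD, hpd⟩ : ∃ d ∈ D, p ^ (j + 1) ∣ d := by
    by_contra! hnone
    have hDN : D ⊆ (n * p ^ j).divisors := fun d hd => Nat.mem_divisors.mpr
      ⟨dvd_mul_prime_pow_of_not_dvd hp (Nat.dvd_of_mem_divisors (hD hd)) (hnone d hd), hN.ne'⟩
    have : ∑ d ∈ D, f d ≤ Sf f (n * p ^ j) := sum_le_sum_of_subset hDN
    omega
  calc f (p ^ (j + 1)) ≤ f d :=
        apply_prime_pow_le_of_dvd hmul hpos hmono hp (Nat.pos_of_mem_divisors (hD hdD)).ne' hpd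
    _ ≤ ∑ d ∈ D, f d := single_le_sum (fun _ _ => Nat.zero_le _) hdD
    _ = _ := hsum.symm

end Construction

theorem stmt3_general (f : ℕ → ℕ) (hf1 : f 1 = 1)
    (hmul : ∀ a b : ℕ, Nat.Coprime a b → f (a * b) = f a * f b)
    (hmono : ∀ p k : ℕ, p.Prime → 1 ≤ k → f (p ^ (k - 1)) ≤ f (p ^ k))
    (n p : ℕ) (hn : FPractical f n) (hp : p.Prime) (hcop : Nat.Coprime p n)
    (k : ℕ) :
    FPractical f (n * p ^ k) ↔
      ∀ i : ℕ, 1 ≤ i → i ≤ k → f (p ^ i) ≤ Sf f (n * p ^ (i - 1)) + 1 := by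
  constructor
  · intro h i hi hik
    obtain ⟨j, rfl⟩ : ∃ j, i = j + 1 := ⟨i - 1, by omega⟩
    exact h.apply_prime_pow_succ_le hmul (fun e he => apply_pos hf1 hmul hmono he)
      (monotone_apply_prime_pow hmono hp) hp (by omega)
  · intro hcond
    induction k with
    | zero => simpa using hn
    | succ j ih =>
      exact hn.mul_prime_pow_succ hmul hp hcop (ih fun i hi hij => hcond i hi (by omega))
        (hcond (j + 1) (by omega) le_rfl)

/-- Construction theorem: for f-practical n and a prime p coprime to n,
n * p^k is f-practical iff f(p^i) ≤ S_f(n * p^(i-1)) + 1 for all 1 ≤ i ≤ k. -/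
theorem stmt3 (f : ℕ → ℕ) (hf1 : f 1 = 1)
    (hmul : ∀ a b : ℕ, Nat.Coprime a b → f (a * b) = f a * f b)
    (hmono : ∀ p k : ℕ, p.Prime → 1 ≤ k → f (p ^ (k - 1)) ≤ f (p ^ k))
    (n p : ℕ) (hn : FPractical f n) (hp : p.Prime) (hcop : Nat.Coprime p n)
    (k : ℕ) (hk : 1 ≤ k) :
    FPractical f (n * p ^ k) ↔
      ∀ i : ℕ, 1 ≤ i → i ≤ k → f (p ^ i) ≤ Sf f (n * p ^ (i - 1)) + 1 :=
  stmt3_general f hf1 hmul hmono n p hn hp hcop k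
end

section
/- Let f : ℕ → ℕ be a multiplicative function (f(1) = 1 and f(ab) = f(a)f(b) whenever gcd(a,b) = 1) satisfying f(p^{k-1}) ≤ f(p^k) for every prime p and integer k ≥ 1. A squarefree positive integer is f-practical if and only if it is weakly f-practical. -/
open Finset

/-!
Since `f 1 = 1` and `f` does not decrease along prime powers, `f` is positive, and on squarefree
numbers it is monotone under divisibility.

If `p ∤ m` is prime, the divisors of `m * p` are those of `m` together with `p` times those of
`m`, so `Sf f (m * p) = (1 + f p) * Sf f m`. When every value up to `Sf f m` is a sum of `f` over
distinct divisors of `m` and `f p ≤ Sf f m + 1`, every `k ≤ Sf f (m * p)` can be written as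
`y + f p * x` with `x, y ≤ Sf f m`, hence as such a sum over divisors of `m * p`. Adjoining the
primes one at a time shows that weakly `f`-practical squarefree numbers are `f`-practical.

Conversely, order the primes by `f` and let `m` be the product of the first `i` of them. A divisor
of `n` not dividing `m` has a prime factor `q` beyond position `i`, so its `f`-value is at least
`f q ≥ f pᵢ`. If `f pᵢ > Sf f m + 1`, the value `Sf f m + 1` could only be realised by divisors
of `m`, whose values sum to `Sf f m`.
-/

section Multiplicative

variable {f : ℕ → ℕ}

theorem pos_of_ne_zero_of_mono_pow (hf1 : f 1 = 1)
    (hmul : ∀ a b : ℕ, Nat.Coprime a b → f (a * b) = f a * f b)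
    (hmono : ∀ p k : ℕ, p.Prime → 1 ≤ k → f (p ^ (k - 1)) ≤ f (p ^ k))
    {n : ℕ} (hn : n ≠ 0) : 0 < f n := by
  have hpow : ∀ p k, p.Prime → 0 < f (p ^ k) := by
    intro p k hp
    induction k with
    | zero => simp [hf1]
    | succ k ih => exact ih.trans_le (hmono p (k + 1) hp k.succ_pos)
  rw [Nat.multiplicative_factorization f hmul hf1 hn, Finsupp.prod]
  exact Finset.prod_pos fun p hp => hpow p _ (Nat.prime_of_mem_primeFactors hp)

theorem le_of_dvd_of_squarefree (hmul : ∀ a b : ℕ, Nat.Coprime a b → f (a * b) = f a * f b)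
    (hpos : ∀ n, n ≠ 0 → 0 < f n) {a d : ℕ} (hd : Squarefree d) (had : a ∣ d) :
    f a ≤ f d := by
  obtain ⟨b, rfl⟩ := had
  obtain ⟨hab, -, hb⟩ := Nat.squarefree_mul_iff.mp hd
  rw [hmul a b hab]
  exact Nat.le_mul_of_pos_right _ (hpos b hb.ne_zero)

end Multiplicative

section DivisorSums

variable {f : ℕ → ℕ} {m p : ℕ}

theorem Sf_one (hf1 : f 1 = 1) : Sf f 1 = 1 := by
  simp [Sf, hf1]

theorem divisors_mul_prime (hp : p.Prime) :
    (m * p).divisors = m.divisors ∪ m.divisors.image (p * ·) := by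
  ext d
  simp only [Nat.divisors_mul, hp.divisors, Finset.mem_mul, Finset.mem_insert,
    Finset.mem_singleton, Finset.mem_union, Finset.mem_image]
  grind

theorem disjoint_divisors_image_mul_prime (hpm : ¬ p ∣ m) :
    Disjoint m.divisors (m.divisors.image (p * ·)) := by
  rw [Finset.disjoint_right]
  rintro _ hd hd'
  obtain ⟨e, -, rfl⟩ := Finset.mem_image.mp hd
  exact hpm ((dvd_mul_right p e).trans (Nat.dvd_of_mem_divisors hd'))

theorem sum_image_mul_prime (hmul : ∀ a b : ℕ, Nat.Coprime a b → f (a * b) = f a * f b)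
    (hp : p.Prime) (hpm : ¬ p ∣ m) {D : Finset ℕ} (hD : D ⊆ m.divisors) :
    ∑ d ∈ D.image (p * ·), f d = f p * ∑ d ∈ D, f d := by
  rw [Finset.sum_image fun _ _ _ _ h => Nat.eq_of_mul_eq_mul_left hp.pos h, Finset.mul_sum]
  refine Finset.sum_congr rfl fun d hd => hmul p d ?_
  exact hp.coprime_iff_not_dvd.mpr fun h => hpm (h.trans (Nat.dvd_of_mem_divisors (hD hd)))

theorem Sf_mul_prime (hmul : ∀ a b : ℕ, Nat.Coprime a b → f (a * b) = f a * f b)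
    (hp : p.Prime) (hpm : ¬ p ∣ m) : Sf f (m * p) = Sf f m + f p * Sf f m := by
  rw [Sf, divisors_mul_prime hp, Finset.sum_union (disjoint_divisors_image_mul_prime hpm),
    sum_image_mul_prime hmul hp hpm subset_rfl, Sf]

end DivisorSums

theorem exists_eq_add_mul_of_le_s4 {c s k : ℕ} (hc : c ≤ s + 1) (hk : k ≤ s + c * s) :
    ∃ x ≤ s, ∃ y ≤ s, k = y + c * x := by
  by_cases hks : s ≤ k / c
  · refine ⟨s, le_rfl, k - c * s, by omega, ?_⟩
    have : c * s ≤ k := (Nat.mul_le_mul_left c hks).trans (Nat.mul_div_le k c)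
    omega
  · refine ⟨k / c, by omega, k % c, ?_, (Nat.mod_add_div k c).symm⟩
    rcases c.eq_zero_or_pos with rfl | hc0
    · simpa using hk
    · have := Nat.mod_lt k hc0
      omega

section FPractical

variable {f : ℕ → ℕ} {m n p : ℕ}

theorem fPractical_iff :
    FPractical f n ↔ 0 < n ∧ ∀ k ≤ Sf f n, ∃ D ⊆ n.divisors, k = ∑ d ∈ D, f d := by
  refine and_congr_right fun _ => ⟨fun h k hk => ?_, fun h k _ hk => h k hk⟩
  rcases k.eq_zero_or_pos with rfl | hk0
  · exact ⟨∅, Finset.empty_subset _, rfl⟩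
  · exact h k hk0 hk

theorem fPractical_one (hf1 : f 1 = 1) : FPractical f 1 := by
  refine fPractical_iff.mpr ⟨Nat.one_pos, fun k hk => ?_⟩
  rw [Sf_one hf1] at hk
  interval_cases k
  · exact ⟨∅, Finset.empty_subset _, rfl⟩
  · exact ⟨{1}, by simp, by simp [hf1]⟩

theorem FPractical.mul_prime (hmul : ∀ a b : ℕ, Nat.Coprime a b → f (a * b) = f a * f b)
    (hm : FPractical f m) (hp : p.Prime) (hpm : ¬ p ∣ m) (hfp : f p ≤ Sf f m + 1) :
    FPractical f (m * p) := by
  obtain ⟨hm0, hsum⟩ := fPractical_iff.mp hm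
  refine fPractical_iff.mpr ⟨Nat.mul_pos hm0 hp.pos, fun k hk => ?_⟩
  rw [Sf_mul_prime hmul hp hpm] at hk
  obtain ⟨x, hx, y, hy, rfl⟩ := exists_eq_add_mul_of_le_s4 hfp hk
  obtain ⟨Dx, hDx, rfl⟩ := hsum x hx
  obtain ⟨Dy, hDy, rfl⟩ := hsum y hy
  refine ⟨Dy ∪ Dx.image (p * ·), ?_, ?_⟩
  · rw [divisors_mul_prime hp]
    exact Finset.union_subset_union hDy (Finset.image_subset_image hDx)
  · have hdisj : Disjoint Dy (Dx.image (p * ·)) :=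
      (disjoint_divisors_image_mul_prime hpm).mono hDy (Finset.image_subset_image hDx)
    rw [Finset.sum_union hdisj, sum_image_mul_prime hmul hp hpm hDx]

theorem FPractical.exists_mem_divisors_not_dvd_le (hn : FPractical f n) (hmn : m ∣ n)
    (hnm : ¬ n ∣ m) (hfn : 0 < f n) : ∃ d ∈ n.divisors, ¬ d ∣ m ∧ f d ≤ Sf f m + 1 := by
  obtain ⟨hn0, hsum⟩ := fPractical_iff.mp hn
  have hm0 : m ≠ 0 := ne_zero_of_dvd_ne_zero hn0.ne' hmn
  have hle : Sf f m + 1 ≤ Sf f n := by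
    have hsub : insert n m.divisors ⊆ n.divisors :=
      Finset.insert_subset (Nat.mem_divisors_self n hn0.ne')
        (Nat.divisors_subset_of_dvd hn0.ne' hmn)
    calc Sf f m + 1 ≤ f n + Sf f m := by omega
      _ = ∑ d ∈ insert n m.divisors, f d :=
        (Finset.sum_insert fun h => hnm (Nat.dvd_of_mem_divisors h)).symm
      _ ≤ Sf f n := Finset.sum_le_sum_of_subset hsub
  obtain ⟨D, hD, hDsum⟩ := hsum _ hle
  by_contra! hcon
  have hDm : D ⊆ m.divisors := fun d hd =>
    Nat.mem_divisors.mpr ⟨by_contra fun h => (hcon d (hD hd) h).not_ge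
      (hDsum ▸ Finset.single_le_sum (fun _ _ => Nat.zero_le _) hd), hm0⟩
  have : Sf f m + 1 ≤ Sf f m := hDsum ▸ Finset.sum_le_sum_of_subset hDm
  omega

end FPractical

theorem exists_prime_dvd_not_dvd_of_squarefree {d m : ℕ} (hd : Squarefree d) (hdm : ¬ d ∣ m) :
    ∃ q, q.Prime ∧ q ∣ d ∧ ¬ q ∣ m := by
  by_contra! h
  refine hdm (Nat.prod_primeFactors_of_squarefree hd ▸ Finset.prod_primes_dvd _ ?_ ?_)
  · exact fun q hq => (Nat.prime_of_mem_primeFactors hq).prime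
  · exact fun q hq => h q (Nat.prime_of_mem_primeFactors hq) (Nat.dvd_of_mem_primeFactors hq)

theorem List.Pairwise.rel_getElem_of_mem_drop {α : Type*} {R : α → α → Prop} {l : List α}
    (hl : l.Pairwise R) (hR : ∀ a, R a a) {i : ℕ} (hi : i < l.length) {q : α} (hq : q ∈ l.drop i) :
    R l[i] q := by
  have hdrop := hl.sublist (List.drop_sublist i l)
  rw [List.drop_eq_getElem_cons hi] at hq hdrop
  rcases List.mem_cons.mp hq with rfl | hq
  · exact hR _
  · exact (List.pairwise_cons.mp hdrop).1 q hq

section SquarefreeList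

variable {n : ℕ} {l : List ℕ}

theorem prod_eq_of_toFinset_eq_primeFactors (hsq : Squarefree n) (hnd : l.Nodup)
    (hl : l.toFinset = n.primeFactors) : l.prod = n := by
  rw [← Nat.prod_primeFactors_of_squarefree hsq, ← hl, List.prod_toFinset _ hnd, List.map_id']

theorem map_pow_factorization_eq_self (hsq : Squarefree n) (hl : ∀ p ∈ l, p ∈ n.primeFactors) :
    l.map (fun p => p ^ n.factorization p) = l := by
  refine List.map_congr_left (fun p hp => ?_) |>.trans (List.map_id l)
  obtain ⟨hp, hpn, -⟩ := Nat.mem_primeFactors.mp (hl p hp)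
  rw [Nat.factorization_eq_one_of_squarefree hsq hp hpn, pow_one, id]

theorem prime_of_toFinset_eq_primeFactors (hl : l.toFinset = n.primeFactors) :
    ∀ p ∈ l, p.Prime := fun _ hp =>
  Nat.prime_of_mem_primeFactors (hl ▸ List.mem_toFinset.mpr hp)

theorem weaklyFPractical_iff_of_squarefree {f : ℕ → ℕ} (hsq : Squarefree n) :
    WeaklyFPractical f n ↔ ∃ l : List ℕ, l.Nodup ∧ l.toFinset = n.primeFactors ∧
      l.Pairwise (fun p q => f p ≤ f q) ∧
      ∀ i (hi : i < l.length), f l[i] ≤ Sf f (l.take i).prod + 1 := by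
  have hmap : ∀ l : List ℕ, l.toFinset = n.primeFactors → ∀ i : ℕ,
      ((l.take i).map fun p => p ^ n.factorization p) = l.take i := fun l hl i =>
    map_pow_factorization_eq_self hsq fun p hp =>
      hl ▸ List.mem_toFinset.mpr (List.mem_of_mem_take hp)
  simp only [WeaklyFPractical, Nat.pos_of_ne_zero hsq.ne_zero, true_and]
  refine exists_congr fun l => and_congr_right fun _ => and_congr_right fun hl => ?_
  simp only [hmap l hl, Fin.forall_iff, List.get_eq_getElem]

end SquarefreeList

section PrimeList

variable {f : ℕ → ℕ} {l : List ℕ}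

theorem not_getElem_dvd_prod_take (hprime : ∀ p ∈ l, p.Prime) (hnd : l.Nodup) {i : ℕ}
    (hi : i < l.length) : ¬ l[i] ∣ (l.take i).prod := fun h =>
  List.disjoint_take_drop hnd le_rfl
    (mem_list_primes_of_dvd_prod (hprime _ (List.getElem_mem hi)).prime
      (fun q hq => (hprime q (List.mem_of_mem_take hq)).prime) h)
    (List.drop_eq_getElem_cons hi ▸ List.mem_cons_self)

theorem fPractical_prod_take (hf1 : f 1 = 1)
    (hmul : ∀ a b : ℕ, Nat.Coprime a b → f (a * b) = f a * f b)
    (hprime : ∀ p ∈ l, p.Prime) (hnd : l.Nodup)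
    (hl : ∀ i (hi : i < l.length), f l[i] ≤ Sf f (l.take i).prod + 1) :
    ∀ i ≤ l.length, FPractical f (l.take i).prod
  | 0, _ => by simpa using fPractical_one hf1
  | i + 1, hi => by
    rw [List.prod_take_succ l i hi]
    exact (fPractical_prod_take hf1 hmul hprime hnd hl i (Nat.le_of_succ_le hi)).mul_prime hmul
      (hprime _ (List.getElem_mem hi)) (not_getElem_dvd_prod_take hprime hnd hi) (hl i hi)

theorem FPractical.getElem_le_Sf_prod_take
    (hmul : ∀ a b : ℕ, Nat.Coprime a b → f (a * b) = f a * f b)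
    (hpos : ∀ n, n ≠ 0 → 0 < f n) {n : ℕ} (hn : FPractical f n) (hsq : Squarefree n)
    (hnd : l.Nodup) (hl : l.toFinset = n.primeFactors) (hsort : l.Pairwise (fun p q => f p ≤ f q))
    {i : ℕ} (hi : i < l.length) : f l[i] ≤ Sf f (l.take i).prod + 1 := by
  have hprime := prime_of_toFinset_eq_primeFactors hl
  have hmn : (l.take i).prod ∣ n := by
    rw [← prod_eq_of_toFinset_eq_primeFactors hsq hnd hl, ← List.take_append_drop i l,
      List.prod_append, List.take_append_drop]
    exact dvd_mul_right _ _
  have hpn : l[i] ∣ n :=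
    Nat.dvd_of_mem_primeFactors (hl ▸ List.mem_toFinset.mpr (List.getElem_mem hi))
  obtain ⟨d, hd, hdm, hfd⟩ := hn.exists_mem_divisors_not_dvd_le hmn
    (fun h => not_getElem_dvd_prod_take hprime hnd hi (hpn.trans h)) (hpos n hsq.ne_zero)
  have hdn := Nat.dvd_of_mem_divisors hd
  have hdsq := hsq.squarefree_of_dvd hdn
  obtain ⟨q, hq, hqd, hqm⟩ := exists_prime_dvd_not_dvd_of_squarefree hdsq hdm
  have hql : q ∈ l := List.mem_toFinset.mp
    (hl ▸ Nat.mem_primeFactors.mpr ⟨hq, hqd.trans hdn, hsq.ne_zero⟩)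
  have hqdrop : q ∈ l.drop i := by
    rw [← List.take_append_drop i l, List.mem_append] at hql
    exact hql.resolve_left fun h => hqm (List.dvd_prod h)
  calc f l[i] ≤ f q := hsort.rel_getElem_of_mem_drop (fun _ => le_rfl) hi hqdrop
    _ ≤ f d := le_of_dvd_of_squarefree hmul hpos hdsq hqd
    _ ≤ Sf f (l.take i).prod + 1 := hfd

theorem exists_perm_pairwise_le_comp {α : Type*} (g : α → ℕ) (s : List α) :
    ∃ l : List α, l.Perm s ∧ l.Pairwise (fun a b => g a ≤ g b) := by
  refine ⟨s.mergeSort fun a b => g a ≤ g b, List.mergeSort_perm _ _, ?_⟩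
  refine (List.pairwise_mergeSort (fun a b c hab hbc => ?_) (fun a b => ?_) s).imp ?_
  · simp only [decide_eq_true_eq] at hab hbc ⊢
    exact hab.trans hbc
  · simpa using le_total (g a) (g b)
  · simp

end PrimeList

theorem stmt4_general (f : ℕ → ℕ) (hf1 : f 1 = 1)
    (hmul : ∀ a b : ℕ, Nat.Coprime a b → f (a * b) = f a * f b)
    (hmono : ∀ p k : ℕ, p.Prime → 1 ≤ k → f (p ^ (k - 1)) ≤ f (p ^ k))
    (n : ℕ) (hsq : Squarefree n) :
    FPractical f n ↔ WeaklyFPractical f n := by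
  rw [weaklyFPractical_iff_of_squarefree hsq]
  constructor
  · intro hn
    obtain ⟨l, hperm, hsort⟩ := exists_perm_pairwise_le_comp f n.primeFactors.toList
    have hnd : l.Nodup := hperm.nodup_iff.mpr n.primeFactors.nodup_toList
    have hl : l.toFinset = n.primeFactors := by
      rw [List.toFinset_eq_of_perm _ _ hperm, Finset.toList_toFinset]
    exact ⟨l, hnd, hl, hsort, fun i hi => hn.getElem_le_Sf_prod_take hmul
      (fun _ => pos_of_ne_zero_of_mono_pow hf1 hmul hmono) hsq hnd hl hsort hi⟩
  · rintro ⟨l, hnd, hl, -, hcond⟩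
    have := fPractical_prod_take hf1 hmul (prime_of_toFinset_eq_primeFactors hl) hnd hcond
      l.length le_rfl
    rwa [List.take_length, prod_eq_of_toFinset_eq_primeFactors hsq hnd hl] at this

/-- A squarefree positive integer is f-practical iff it is weakly f-practical. -/
theorem stmt4 (f : ℕ → ℕ) (hf1 : f 1 = 1)
    (hmul : ∀ a b : ℕ, Nat.Coprime a b → f (a * b) = f a * f b)
    (hmono : ∀ p k : ℕ, p.Prime → 1 ≤ k → f (p ^ (k - 1)) ≤ f (p ^ k))
    (n : ℕ) (hn : 0 < n) (hsq : Squarefree n) :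
    FPractical f n ↔ WeaklyFPractical f n :=
  stmt4_general f hf1 hmul hmono n hsq
end

section
/- Every positive integer n is τ-practical, where τ is the number-of-divisors function. That is, for every positive integer n and every positive integer m ≤ ∑_{d | n} τ(d), there is a set D of distinct divisors of n with m = ∑_{d ∈ D} τ(d). -/
open Finset

/-!
A finite set of weighted points, listed in increasing order, represents every integer up to its
total weight as a subset sum as soon as each weight exceeds the total weight of the smaller points
by at most one: choose greedily from the top. The divisors of `n` with weight `τ` satisfy this,
because every proper divisor `e` of `d` is a smaller divisor of `n` with `τ(e) ≥ 1`, so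
`τ(d) = 1 + #{proper divisors of d} ≤ 1 + ∑_{e ∣ n, e < d} τ(e)`.
-/

namespace Finset

variable {α : Type*} [LinearOrder α]

theorem exists_subset_sum_eq_of_le_one_add_sum_lt (f : α → ℕ) {s : Finset α}
    (hs : ∀ x ∈ s, f x ≤ 1 + ∑ y ∈ s with y < x, f y) {m : ℕ} (hm : m ≤ ∑ x ∈ s, f x) :
    ∃ D ⊆ s, m = ∑ d ∈ D, f d := by
  induction s using induction_on_max generalizing m with
  | empty => exact ⟨∅, empty_subset _, by simpa using hm⟩
  | insert a s hlt ih =>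
    have ha : a ∉ s := fun h => (hlt a h).false
    have hfilter : ∀ x ≤ a, {y ∈ insert a s | y < x} = {y ∈ s | y < x} := fun x hx => by
      rw [filter_insert, if_neg hx.not_gt]
    have hs' : ∀ x ∈ s, f x ≤ 1 + ∑ y ∈ s with y < x, f y := fun x hx => by
      simpa only [hfilter x (hlt x hx).le] using hs x (mem_insert_of_mem hx)
    have hfa : f a ≤ 1 + ∑ y ∈ s, f y := by
      simpa only [hfilter a le_rfl, filter_true_of_mem hlt] using hs a (mem_insert_self a s)
    rw [sum_insert ha] at hm
    by_cases ham : f a ≤ m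
    · obtain ⟨D, hDs, hD⟩ := ih hs' (m := m - f a) (by omega)
      refine ⟨insert a D, insert_subset_insert a hDs, ?_⟩
      rw [sum_insert fun h => ha (hDs h)]
      omega
    · obtain ⟨D, hDs, hD⟩ := ih hs' (m := m) (by omega)
      exact ⟨D, hDs.trans (subset_insert a s), hD⟩

end Finset

namespace Nat

theorem card_divisors_le_one_add_sum_properDivisors {d : ℕ} (hd : d ≠ 0) :
    #d.divisors ≤ 1 + ∑ e ∈ d.properDivisors, #e.divisors := by
  rw [← cons_self_properDivisors hd, card_cons, add_comm, card_eq_sum_ones]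
  gcongr with e he
  exact Finset.card_pos.2 (nonempty_divisors.2 (pos_of_mem_properDivisors he).ne')

theorem card_divisors_le_one_add_sum_divisors_lt {n d : ℕ} (hn : n ≠ 0) (hd : d ∈ n.divisors) :
    #d.divisors ≤ 1 + ∑ e ∈ n.divisors with e < d, #e.divisors := by
  have hdn : d ∣ n := dvd_of_mem_divisors hd
  refine (card_divisors_le_one_add_sum_properDivisors (ne_zero_of_dvd_ne_zero hn hdn)).trans ?_
  gcongr
  intro e he
  rw [mem_properDivisors] at he
  exact mem_filter.2 ⟨mem_divisors.2 ⟨he.1.trans hdn, hn⟩, he.2⟩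

end Nat

/-- Every positive integer is τ-practical, where τ is the number-of-divisors function. -/
theorem stmt8 (n : ℕ) (hn : 0 < n) :
    FPractical (fun m => m.divisors.card) n :=
  ⟨hn, fun _ _ hm => exists_subset_sum_eq_of_le_one_add_sum_lt _
    (fun _ hd => Nat.card_divisors_le_one_add_sum_divisors_lt hn.ne' hd) hm⟩
end

section
/- Fix a positive integer n and define the multiplicative function f_n : ℕ → ℕ by f_n(1) = 1 and f_n(p^k) = 2 if the prime p divides n, and f_n(p^k) = 3 otherwise (extended multiplicatively, so f_n(m) = ∏_{p^k ∥ m} f_n(p^k)). Then the set of f_n-practical numbers is exactly {1} ∪ {m ≥ 1 : gcd(m, n) > 1}, and this set has asymptotic density 1 − φ(n)/n, i.e., (1/N)·#{m ≤ N : m is f_n-practical} tends to 1 − φ(n)/n as N → ∞. -/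
/-!
If `p ∣ n` then `f p = 2 = Sf f 1 + 1`, so every power of `p` is `f`-practical; and once
`Sf f m ≥ 2`, any prime power `q ^ k` with `q ∤ m` can be multiplied in, because `f q ≤ 3`. This
builds every `m` sharing a prime factor with `n`. If `m > 1` is coprime to `n`, every `f d` with
`1 < d ∣ m` is a power of `3`, so no subset sum equals `2`. The practical numbers up to `N` are
therefore `1` and the integers not coprime to `n`, and coprime integers occur `φ n` times in every
period of length `n`.
-/

open Finset

open scoped Classical

/-- The multiplicative function with f_n(p^k) = 2 if p ∣ n and 3 otherwise. -/
def fdens (n m : ℕ) : ℕ := ∏ p ∈ m.primeFactors, (if p ∣ n then 2 else 3)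

open Filter Topology

theorem Nat.divisors_mul_prime_pow_succ {m q : ℕ} (hq : q.Prime) (k : ℕ) :
    (m * q ^ (k + 1)).divisors = (m * q ^ k).divisors ∪ m.divisors.image (· * q ^ (k + 1)) := by
  ext d
  simp only [mem_union, mem_image, Nat.mem_divisors]
  constructor
  · rintro ⟨hd, hne⟩
    have hm : m ≠ 0 := left_ne_zero_of_mul hne
    obtain ⟨a, b, ha, hb, rfl⟩ := Nat.dvd_mul.mp hd
    obtain ⟨j, hj, rfl⟩ := (Nat.dvd_prime_pow hq).mp hb
    rcases hj.lt_or_eq with hj | rfl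
    · exact .inl ⟨mul_dvd_mul ha (pow_dvd_pow q (by omega)),
        mul_ne_zero hm (pow_ne_zero _ hq.ne_zero)⟩
    · exact .inr ⟨a, ⟨ha, hm⟩, rfl⟩
  · rintro (⟨hd, hne⟩ | ⟨a, ⟨ha, hm⟩, rfl⟩)
    · exact ⟨hd.trans (mul_dvd_mul_left m (pow_dvd_pow q k.le_succ)),
        mul_ne_zero (left_ne_zero_of_mul hne) (pow_ne_zero _ hq.ne_zero)⟩
    · exact ⟨mul_dvd_mul_right ha _, mul_ne_zero hm (pow_ne_zero _ hq.ne_zero)⟩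

theorem Nat.disjoint_divisors_mul_prime_pow_image {m q : ℕ} (hq : q.Prime) (hqm : ¬ q ∣ m)
    (k : ℕ) (s : Finset ℕ) :
    Disjoint (m * q ^ k).divisors (s.image (· * q ^ (k + 1))) := by
  refine disjoint_left.mpr fun d hd hd' => hqm ?_
  obtain ⟨a, -, rfl⟩ := mem_image.mp hd'
  have : q * q ^ k ∣ m * q ^ k := by
    rw [← pow_succ']
    exact (dvd_mul_left _ a).trans (Nat.mem_divisors.mp hd).1
  exact (Nat.mul_dvd_mul_iff_right (pow_pos hq.pos k)).mp this

theorem Nat.exists_eq_add_mul_of_le {a b v t : ℕ} (hv : v ≤ a + 1) (ht : t ≤ a + b * v) :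
    ∃ s ≤ b, ∃ r ≤ a, t = r + s * v := by
  induction b with
  | zero => exact ⟨0, le_rfl, t, by simpa using ht, by simp⟩
  | succ b ih =>
    by_cases hb : t ≤ a + b * v
    · obtain ⟨s, hs, r, hr, rfl⟩ := ih hb
      exact ⟨s, by omega, r, hr, rfl⟩
    · rw [add_mul, one_mul] at ht
      exact ⟨b + 1, le_rfl, t - (b * v + v), by omega, by rw [add_mul, one_mul]; omega⟩

section Practical

variable {f : ℕ → ℕ}

theorem FPractical.exists_subset_sum_eq {m t : ℕ} (h : FPractical f m) (ht : t ≤ Sf f m) :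
    ∃ D ⊆ m.divisors, t = ∑ d ∈ D, f d := by
  rcases t.eq_zero_or_pos with rfl | ht0
  · exact ⟨∅, empty_subset _, rfl⟩
  · exact h.2 t ht0 ht

theorem Sf_mono_of_dvd {a b : ℕ} (hab : a ∣ b) (hb : b ≠ 0) : Sf f a ≤ Sf f b :=
  sum_le_sum_of_subset (Nat.divisors_subset_of_dvd hb hab)

variable {m q v : ℕ}

theorem sum_image_mul_prime_pow (hq : q.Prime)
    (hf : ∀ a ∈ m.divisors, ∀ j ≠ 0, f (a * q ^ j) = f a * v) {D : Finset ℕ}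
    (hD : D ⊆ m.divisors) (k : ℕ) :
    ∑ d ∈ D.image (· * q ^ (k + 1)), f d = (∑ d ∈ D, f d) * v := by
  rw [sum_image fun x _ y _ h => mul_right_cancel₀ (pow_ne_zero _ hq.ne_zero) h, sum_mul]
  exact sum_congr rfl fun a ha => hf a (hD ha) (k + 1) k.succ_ne_zero

theorem Sf_mul_prime_pow_succ_s9 (hq : q.Prime) (hqm : ¬ q ∣ m)
    (hf : ∀ a ∈ m.divisors, ∀ j ≠ 0, f (a * q ^ j) = f a * v) (k : ℕ) :
    Sf f (m * q ^ (k + 1)) = Sf f (m * q ^ k) + Sf f m * v := by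
  rw [Sf, Nat.divisors_mul_prime_pow_succ hq,
    sum_union (Nat.disjoint_divisors_mul_prime_pow_image hq hqm k _),
    sum_image_mul_prime_pow hq hf subset_rfl]
  rfl

/-- A subset sum up to `Sf f (m * q ^ (k + 1))` splits as a subset sum over the divisors of
`m * q ^ k` plus `v` times a subset sum over the divisors of `m`; the condition `v ≤ Sf f m + 1`
leaves no gap between the two ranges. -/
theorem FPractical.mul_prime_pow (hm : FPractical f m) (hq : q.Prime) (hqm : ¬ q ∣ m)
    (hf : ∀ a ∈ m.divisors, ∀ j ≠ 0, f (a * q ^ j) = f a * v) (hv : v ≤ Sf f m + 1)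
    (k : ℕ) : FPractical f (m * q ^ k) := by
  induction k with
  | zero => simpa using hm
  | succ k ih =>
    have hne : m * q ^ k ≠ 0 := ih.1.ne'
    refine ⟨Nat.pos_of_ne_zero (mul_ne_zero hm.1.ne' (pow_ne_zero _ hq.ne_zero)),
      fun t _ ht => ?_⟩
    rw [Sf_mul_prime_pow_succ_s9 hq hqm hf] at ht
    have hv' : v ≤ Sf f (m * q ^ k) + 1 :=
      hv.trans (by gcongr; exact Sf_mono_of_dvd (dvd_mul_right m _) hne)
    obtain ⟨s, hs, r, hr, rfl⟩ := Nat.exists_eq_add_mul_of_le hv' ht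
    obtain ⟨D₁, hD₁, rfl⟩ := ih.exists_subset_sum_eq hr
    obtain ⟨D₂, hD₂, rfl⟩ := hm.exists_subset_sum_eq hs
    refine ⟨D₁ ∪ D₂.image (· * q ^ (k + 1)), ?_, ?_⟩
    · rw [Nat.divisors_mul_prime_pow_succ hq]
      exact union_subset_union hD₁ (image_subset_image hD₂)
    · rw [sum_union ((Nat.disjoint_divisors_mul_prime_pow_image hq hqm k D₂).mono_left hD₁),
        sum_image_mul_prime_pow hq hf hD₂]

end Practical

section fdens

variable {n : ℕ}

@[simp]
theorem fdens_one (n : ℕ) : fdens n 1 = 1 := by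
  simp [fdens]

theorem fdens_pos (n m : ℕ) : 0 < fdens n m :=
  prod_pos fun p _ => by split_ifs <;> norm_num

theorem fdens_prime {q : ℕ} (hq : q.Prime) : fdens n q = if q ∣ n then 2 else 3 := by
  simp [fdens, hq.primeFactors]

theorem fdens_prime_le_three {q : ℕ} (hq : q.Prime) : fdens n q ≤ 3 := by
  rw [fdens_prime hq]; split_ifs <;> norm_num

theorem fdens_mul_prime_pow {d q j : ℕ} (hd : d ≠ 0) (hq : q.Prime) (hqd : ¬ q ∣ d)
    (hj : j ≠ 0) : fdens n (d * q ^ j) = fdens n d * fdens n q := by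
  have hq' : q ∉ d.primeFactors := fun h => hqd (Nat.dvd_of_mem_primeFactors h)
  rw [fdens, Nat.primeFactors_mul hd (pow_ne_zero j hq.ne_zero),
    Nat.primeFactors_prime_pow hj hq, union_comm, ← insert_eq, prod_insert hq', mul_comm,
    fdens_prime hq]
  rfl

theorem three_dvd_fdens_of_coprime {d : ℕ} (hd : 1 < d) (hdn : d.Coprime n) :
    3 ∣ fdens n d := by
  have h : fdens n d = 3 ^ d.primeFactors.card := by
    rw [fdens, ← prod_const]
    refine prod_congr rfl fun p hp => if_neg fun hpn => ?_
    exact (Nat.prime_of_mem_primeFactors hp).one_lt.ne'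
      (Nat.eq_one_of_dvd_coprimes hdn (Nat.dvd_of_mem_primeFactors hp) hpn)
  rw [h]
  exact dvd_pow_self 3 (card_ne_zero.mpr (Nat.nonempty_primeFactors.mpr hd))

theorem two_le_Sf_fdens {m : ℕ} (hm : 1 < m) : 2 ≤ Sf (fdens n) m := by
  have hsub : ({1, m} : Finset ℕ) ⊆ m.divisors := by
    simp only [insert_subset_iff, singleton_subset_iff, Nat.one_mem_divisors]
    exact ⟨by omega, Nat.mem_divisors_self m (by omega)⟩
  calc 2 = ∑ d ∈ ({1, m} : Finset ℕ), 1 := by rw [sum_pair hm.ne]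
    _ ≤ ∑ d ∈ ({1, m} : Finset ℕ), fdens n d := sum_le_sum fun d _ => fdens_pos n d
    _ ≤ Sf (fdens n) m := sum_le_sum_of_subset hsub

theorem FPractical.mul_prime_pow_of_fdens_le {m q : ℕ} (hm : FPractical (fdens n) m)
    (hq : q.Prime) (hqm : ¬ q ∣ m) (hv : fdens n q ≤ Sf (fdens n) m + 1) (k : ℕ) :
    FPractical (fdens n) (m * q ^ k) :=
  hm.mul_prime_pow hq hqm
    (fun _ ha _ hj => fdens_mul_prime_pow (Nat.pos_of_mem_divisors ha).ne' hq
      (fun h => hqm (h.trans (Nat.dvd_of_mem_divisors ha))) hj) hv k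

theorem fpractical_fdens_one (n : ℕ) : FPractical (fdens n) 1 :=
  ⟨one_pos, fun t ht0 ht => ⟨{1}, by simp, by simp_all [Sf]; omega⟩⟩

theorem not_fpractical_fdens_of_coprime {m : ℕ} (hm : 1 < m) (hmn : m.Coprime n) :
    ¬ FPractical (fdens n) m := by
  intro h
  obtain ⟨D, hD, hsum⟩ := h.2 2 two_pos (two_le_Sf_fdens hm)
  have h3 : 3 ∣ ∑ d ∈ D.erase 1, fdens n d := by
    refine dvd_sum fun d hd => three_dvd_fdens_of_coprime ?_ ?_
    · have := Nat.pos_of_mem_divisors (hD (mem_of_mem_erase hd))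
      have := ne_of_mem_erase hd
      omega
    · exact hmn.coprime_dvd_left (Nat.dvd_of_mem_divisors (hD (mem_of_mem_erase hd)))
  by_cases h1 : 1 ∈ D
  · rw [← sum_erase_add D _ h1, fdens_one] at hsum
    omega
  · rw [erase_eq_of_notMem h1] at h3
    omega

/-- Remove the `q`-part of `m` for a prime `q ≠ p`; what is left is practical by induction and
has `Sf ≥ 2`, which is enough to multiply back any prime power since `fdens n q ≤ 3`. -/
theorem fpractical_fdens_of_prime_dvd {p m : ℕ} (hp : p.Prime) (hpn : p ∣ n) (hm : 0 < m)
    (hpm : p ∣ m) : FPractical (fdens n) m := by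
  induction m using Nat.strong_induction_on with
  | _ m ih =>
    by_cases hq : ∃ q, q.Prime ∧ q ∣ m ∧ q ≠ p
    · obtain ⟨q, hq, hqm, hqp⟩ := hq
      set m' := ordCompl[q] m
      have hm' : q ^ m.factorization q * m' = m := Nat.ordProj_mul_ordCompl_eq_self m q
      have hpm' : p ∣ m' := (Nat.Coprime.pow_right _ ((Nat.coprime_primes hp hq).mpr
        hqp.symm)).dvd_of_dvd_mul_left (hm' ▸ hpm)
      have hm'0 : 0 < m' := Nat.ordCompl_pos q hm.ne'
      have hlt : m' < m := (Nat.le_of_dvd hm (Nat.ordCompl_dvd m q)).lt_of_ne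
        fun h => Nat.not_dvd_ordCompl hq hm.ne' (by rw [h]; exact hqm)
      have hv : fdens n q ≤ Sf (fdens n) m' + 1 := by
        linarith [fdens_prime_le_three (n := n) hq,
          two_le_Sf_fdens (n := n) (hp.one_lt.trans_le (Nat.le_of_dvd hm'0 hpm'))]
      have := (ih m' hlt hm'0 hpm').mul_prime_pow_of_fdens_le hq
        (Nat.not_dvd_ordCompl hq hm.ne') hv (m.factorization q)
      rwa [mul_comm, hm'] at this
    · push Not at hq
      have hmp : m = p ^ m.primeFactorsList.length :=
        Nat.eq_prime_pow_of_unique_prime_dvd hm.ne' fun hq' hqm => hq _ hq' hqm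
      have hv : fdens n p ≤ Sf (fdens n) 1 + 1 := by simp [Sf, fdens_prime hp, hpn]
      simpa [← hmp] using (fpractical_fdens_one n).mul_prime_pow_of_fdens_le hp
        hp.not_dvd_one hv m.primeFactorsList.length

end fdens

theorem fpractical_fdens_iff (n m : ℕ) :
    FPractical (fdens n) m ↔ m = 1 ∨ (1 ≤ m ∧ 1 < Nat.gcd m n) := by
  constructor
  · intro h
    rcases eq_or_ne m 1 with rfl | hm
    · exact .inl rfl
    refine .inr ⟨h.1, ?_⟩
    by_contra! hgcd
    have hm0 := h.1
    have := Nat.gcd_pos_of_pos_left n hm0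
    exact not_fpractical_fdens_of_coprime (by omega) (by omega : Nat.gcd m n = 1) h
  · rintro (rfl | ⟨hm, hgcd⟩)
    · exact fpractical_fdens_one n
    · have hp := Nat.minFac_prime (ne_of_gt hgcd)
      exact fpractical_fdens_of_prime_dvd hp
        ((Nat.minFac_dvd _).trans (Nat.gcd_dvd_right m n)) hm
        ((Nat.minFac_dvd _).trans (Nat.gcd_dvd_left m n))

theorem card_fpractical_fdens_add_card_coprime (n : ℕ) {N : ℕ} (hN : 1 ≤ N) :
    #{m ∈ Icc 1 N | FPractical (fdens n) m} + #{m ∈ Icc 1 N | n.Coprime m} = N + 1 := by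
  have hunion : {m ∈ Icc 1 N | FPractical (fdens n) m} ∪ {m ∈ Icc 1 N | n.Coprime m}
      = Icc 1 N := by
    rw [← filter_or]
    refine filter_true_of_mem fun m hm => ?_
    rw [fpractical_fdens_iff, Nat.Coprime, Nat.gcd_comm n m]
    obtain ⟨hm1, -⟩ := mem_Icc.mp hm
    have := Nat.gcd_pos_of_pos_left n hm1
    omega
  have hinter :
      {m ∈ Icc 1 N | FPractical (fdens n) m} ∩ {m ∈ Icc 1 N | n.Coprime m} = {1} := by
    rw [← filter_and]
    ext m
    simp only [mem_filter, mem_Icc, mem_singleton, fpractical_fdens_iff, Nat.Coprime,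
      Nat.gcd_comm n m]
    constructor
    · omega
    · rintro rfl
      simp [hN]
  rw [← card_union_add_card_inter, hunion, hinter, Nat.card_Icc, card_singleton]
  omega

theorem card_filter_coprime_Ico_mul (n b k : ℕ) :
    #{m ∈ Ico b (b + k * n) | n.Coprime m} = k * n.totient := by
  induction k with
  | zero => simp
  | succ k ih =>
    rw [← Ico_union_Ico_eq_Ico (b := b + k * n) (by omega) (by nlinarith), filter_union,
      card_union_of_disjoint (disjoint_filter_filter (Ico_disjoint_Ico_consecutive _ _ _)), ih,
      show b + (k + 1) * n = b + k * n + n by ring, Nat.filter_coprime_Ico_eq_totient]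
    ring

theorem tendsto_div_of_monotone_of_apply_mul {f : ℕ → ℕ} (hf : Monotone f) {a c : ℕ}
    (ha : 0 < a) (h : ∀ k, f (k * a) = k * c) :
    Tendsto (fun N => (f N : ℝ) / N) atTop (𝓝 (c / a)) := by
  have hlim (s : ℝ) :
      Tendsto (fun N : ℕ => (c : ℝ) / a + s * c / N) atTop (𝓝 (c / a)) := by
    simpa using tendsto_const_nhds.add (tendsto_const_div_atTop_nhds_zero_nat (s * c))
  have hbound (N : ℕ) : |(f N : ℝ) * a - N * c| ≤ a * c := by
    have hlo := hf (Nat.div_mul_le_self N a)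
    have hhi := hf (Nat.lt_div_mul_add (a := N) ha).le
    rw [← add_one_mul, h] at hhi
    rw [h] at hlo
    have hdiv₁ : ((N / a * a : ℕ) : ℝ) ≤ N := by exact_mod_cast Nat.div_mul_le_self N a
    have hdiv₂ : (N : ℝ) < ((N / a * a + a : ℕ) : ℝ) := by
      exact_mod_cast Nat.lt_div_mul_add ha
    have hlo' : ((N / a * c : ℕ) : ℝ) ≤ f N := by exact_mod_cast hlo
    have hhi' : (f N : ℝ) ≤ ((N / a + 1) * c : ℕ) := by exact_mod_cast hhi
    push_cast at hlo' hhi' hdiv₁ hdiv₂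
    rw [abs_le]
    constructor <;> nlinarith [(Nat.cast_nonneg c : (0 : ℝ) ≤ c),
      (Nat.cast_nonneg a : (0 : ℝ) ≤ a)]
  have ha' : (0 : ℝ) < a := by exact_mod_cast ha
  refine tendsto_of_tendsto_of_tendsto_of_le_of_le' (hlim (-1)) (hlim 1) ?_ ?_ <;>
    filter_upwards [eventually_ge_atTop 1] with N hN <;>
    have hN' : (0 : ℝ) < N := by exact_mod_cast hN
  · rw [div_add_div _ _ ha'.ne' hN'.ne', div_le_div_iff₀ (by positivity) hN']
    nlinarith [abs_le.mp (hbound N)]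
  · rw [div_add_div _ _ ha'.ne' hN'.ne', div_le_div_iff₀ hN' (by positivity)]
    nlinarith [abs_le.mp (hbound N)]

/-- The f_n-practical numbers are exactly 1 together with the positive integers not coprime
to n, and this set has asymptotic density 1 - φ(n)/n. -/
theorem stmt9 (n : ℕ) (hn : 0 < n) :
    (∀ m : ℕ, FPractical (fdens n) m ↔ (m = 1 ∨ (1 ≤ m ∧ 1 < Nat.gcd m n))) ∧
    Filter.Tendsto
      (fun N : ℕ =>
        (((Finset.Icc 1 N).filter fun m => FPractical (fdens n) m).card : ℝ) / N)
      Filter.atTop (nhds (1 - (Nat.totient n : ℝ) / n)) := by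
  refine ⟨fpractical_fdens_iff n, ?_⟩
  have hcoprime : Tendsto (fun N : ℕ => (#{m ∈ Icc 1 N | n.Coprime m} : ℝ) / N) atTop
      (𝓝 (n.totient / n)) :=
    tendsto_div_of_monotone_of_apply_mul
      (fun _ _ h => card_le_card (filter_subset_filter _ (Icc_subset_Icc_right h))) hn
      fun k => by rw [← Ico_add_one_right_eq_Icc, add_comm, card_filter_coprime_Ico_mul]
  have hlim := (tendsto_const_nhds (x := (1 : ℝ))).add
    (tendsto_one_div_atTop_nhds_zero_nat.sub hcoprime)
  rw [zero_sub, ← sub_eq_add_neg] at hlim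
  refine hlim.congr' ?_
  filter_upwards [eventually_ge_atTop 1] with N hN
  have hcard : (#{m ∈ Icc 1 N | FPractical (fdens n) m} : ℝ) + #{m ∈ Icc 1 N | n.Coprime m}
      = N + 1 := by exact_mod_cast card_fpractical_fdens_add_card_coprime n hN
  have hN' : (N : ℝ) ≠ 0 := by positivity
  field_simp
  linarith
end

section
/- The densities of the f-practical sets are dense in [0,1]: for every real α ∈ [0,1] and every ε > 0, there exists a multiplicative function f : ℕ → ℕ (f(1) = 1, f(ab) = f(a)f(b) for gcd(a,b) = 1, and f(p^{k-1}) ≤ f(p^k) for all primes p and integers k ≥ 1) such that the set of f-practical numbers has an asymptotic density δ with |δ − α| < ε. -/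
/-!
Fix a finite set `S` of primes and let `f` be the multiplicative function with `f (p ^ k) = 1`
for `p ∈ S` and `f (p ^ k) = 3` for `p ∉ S` (`k ≥ 1`). A number `n > 1` is `f`-practical exactly
when some prime of `S` divides it. If so, every divisor `d` of `n` satisfies
`f d ≤ 1 + ∑ {f e | e ∣ n, f e < f d}`, and adding the weights in increasing order then reaches
every value up to `S_f(n)`. If not, every divisor other than `1` has weight at least `3`, so `2`
is not a sum of weights. Hence the `f`-practical numbers have density `1 - ∏_{p ∈ S} (1 - 1/p)`,
and since `∑ 1/p` diverges, adding primes larger than `1/ε` to `S` one at a time brings this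
product within `ε` of any number in `[0, 1]`.
-/

open Finset

open scoped Classical
open Filter Topology Function ArithmeticFunction

def HasDensity (P : ℕ → Prop) (δ : ℝ) : Prop :=
  Tendsto (fun N : ℕ => (#{m ∈ Icc 1 N | P m} : ℝ) / N) atTop (𝓝 δ)

theorem HasDensity.of_abs_sub_le {P : ℕ → Prop} {δ C : ℝ}
    (h : ∀ N : ℕ, |(#{m ∈ Icc 1 N | P m} : ℝ) - δ * N| ≤ C) : HasDensity P δ := by
  rw [HasDensity, ← tendsto_sub_nhds_zero_iff]
  refine squeeze_zero_norm' ?_ (tendsto_const_div_atTop_nhds_zero_nat C)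
  filter_upwards [eventually_gt_atTop 0] with N hN
  have hN' : (0 : ℝ) < N := by exact_mod_cast hN
  rw [Real.norm_eq_abs, div_sub' hN'.ne', abs_div, abs_of_pos hN', mul_comm]
  exact div_le_div_of_nonneg_right (h N) hN'.le

section Periodic

variable {P : ℕ → Prop} [DecidablePred P] {q : ℕ}

theorem card_filter_Icc_add_period (hP : Periodic P q) (N : ℕ) :
    #{m ∈ Icc 1 (N + q) | P m} = #{m ∈ Icc 1 N | P m} + q.count P := by
  have hsplit : Icc 1 (N + q) = Icc 1 N ∪ Ico (N + 1) (N + 1 + q) := by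
    ext m; simp only [mem_union, mem_Icc, mem_Ico]; omega
  have hdisj : Disjoint (Icc 1 N) (Ico (N + 1) (N + 1 + q)) :=
    disjoint_left.2 fun m h1 h2 => by rw [mem_Icc] at h1; rw [mem_Ico] at h2; omega
  rw [hsplit, filter_union, card_union_of_disjoint (disjoint_filter_filter hdisj),
    Nat.filter_Ico_card_eq_of_periodic _ _ _ hP]

theorem card_filter_Icc_mul_add (hP : Periodic P q) (k r : ℕ) :
    #{m ∈ Icc 1 (k * q + r) | P m} = k * q.count P + #{m ∈ Icc 1 r | P m} := by
  induction k with
  | zero => simp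
  | succ k ih => rw [add_mul, one_mul, add_right_comm, card_filter_Icc_add_period hP, ih]; ring

theorem abs_card_filter_Icc_sub_le (hP : Periodic P q) (hq : 0 < q) (N : ℕ) :
    |(#{m ∈ Icc 1 N | P m} : ℝ) - (q.count P / q : ℝ) * N| ≤ q := by
  obtain ⟨k, r, hr, rfl⟩ : ∃ k r, r < q ∧ N = k * q + r :=
    ⟨N / q, N % q, Nat.mod_lt _ hq, (Nat.div_add_mod' N q).symm⟩
  have hq' : (0 : ℝ) < q := by exact_mod_cast hq
  have hcount : (q.count P : ℝ) ≤ q := by exact_mod_cast Nat.count_le (p := P)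
  have hrest : (#{m ∈ Icc 1 r | P m} : ℝ) ≤ r := by
    exact_mod_cast (card_filter_le _ _).trans (by simp)
  have hr' : (r : ℝ) < q := by exact_mod_cast hr
  have htail : (q.count P : ℝ) * r / q ≤ r := by
    rw [div_le_iff₀ hq']; nlinarith [(Nat.cast_nonneg r : (0 : ℝ) ≤ r)]
  have hsplit : (q.count P / q : ℝ) * ↑(k * q + r) = k * q.count P + q.count P * r / q := by
    push_cast; field_simp
  rw [card_filter_Icc_mul_add hP, hsplit, abs_le]
  push_cast
  constructor <;> nlinarith [(Nat.cast_nonneg (#{m ∈ Icc 1 r | P m}) : (0 : ℝ) ≤ _),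
    (by positivity : (0 : ℝ) ≤ q.count P * r / q)]

end Periodic

theorem tendsto_prod_one_sub_of_not_summable {x : ℕ → ℝ} (h0 : ∀ n, 0 ≤ x n) (h1 : ∀ n, x n ≤ 1)
    (hx : ¬ Summable x) : Tendsto (fun n => ∏ i ∈ range n, (1 - x i)) atTop (𝓝 0) := by
  have hsum : Tendsto (fun n => ∑ i ∈ range n, x i) atTop atTop :=
    (not_summable_iff_tendsto_nat_atTop_of_nonneg h0).1 hx
  refine squeeze_zero (fun n => prod_nonneg fun i _ => sub_nonneg.2 (h1 i)) (fun n => ?_)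
    (Real.tendsto_exp_atBot.comp (tendsto_neg_atTop_atBot.comp hsum))
  calc ∏ i ∈ range n, (1 - x i) ≤ ∏ i ∈ range n, Real.exp (-x i) :=
        prod_le_prod (fun i _ => sub_nonneg.2 (h1 i)) fun i _ => by
          linarith [Real.add_one_le_exp (-x i)]
    _ = Real.exp (-∑ i ∈ range n, x i) := by rw [← Real.exp_sum, sum_neg_distrib]

theorem exists_abs_sub_lt_of_tendsto_zero {P : ℕ → ℝ} {β ε : ℝ} (hP : Tendsto P atTop (𝓝 0))
    (hβ : 0 ≤ β) (hβP : β ≤ P 0) (hε : 0 < ε) (hstep : ∀ n, P n - ε ≤ P (n + 1)) :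
    ∃ n, |P n - β| < ε := by
  have hex : ∃ n, P n < β + ε := (hP.eventually (gt_mem_nhds (by linarith))).exists
  refine ⟨Nat.find hex, abs_lt.2 ⟨?_, by linarith [Nat.find_spec hex]⟩⟩
  -- at the first index where `P` drops below `β + ε`, the step bound keeps it above `β`
  rcases hn : Nat.find hex with _ | n
  · linarith
  · have hprev := Nat.find_min hex (by omega : n < Nat.find hex)
    linarith [hstep n, not_lt.1 hprev]

theorem exists_prod_one_sub_inv_primes_near {β ε : ℝ} (hβ0 : 0 ≤ β) (hβ1 : β ≤ 1) (hε : 0 < ε) :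
    ∃ S : Finset ℕ, (∀ p ∈ S, p.Prime) ∧ |∏ p ∈ S, (1 - (p : ℝ)⁻¹) - β| < ε := by
  obtain ⟨a, ha⟩ := exists_nat_one_div_lt hε
  set x : ℕ → ℝ := fun i => if i.Prime ∧ a < i then (i : ℝ)⁻¹ else 0
  have hx0 : ∀ i, 0 ≤ x i := fun i => by simp only [x]; split_ifs <;> positivity
  have hxε : ∀ i, x i ≤ 1 / (a + 1) := fun i => by
    simp only [x]; split_ifs with hi
    · rw [one_div]; exact inv_anti₀ (by positivity) (by exact_mod_cast hi.2)
    · positivity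
  have hx1 : ∀ i, x i ≤ 1 := fun i =>
    (hxε i).trans (div_le_one_of_le₀ (by linarith [(Nat.cast_nonneg a : (0 : ℝ) ≤ a)])
      (by positivity))
  have hxs : ¬ Summable x := by
    rw [← summable_nat_add_iff (a + 1)]
    convert (summable_nat_add_iff (a + 1)).not.2 not_summable_one_div_on_primes using 2
    funext n
    have han : a < n + (a + 1) := by omega
    simp [x, Set.indicator_apply, han]
  have hP0 : ∀ n, 0 ≤ ∏ i ∈ range n, (1 - x i) := fun n =>
    prod_nonneg fun i _ => sub_nonneg.2 (hx1 i)
  have hP1 : ∀ n, ∏ i ∈ range n, (1 - x i) ≤ 1 := fun n =>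
    prod_le_one (fun i _ => sub_nonneg.2 (hx1 i)) fun i _ => by linarith [hx0 i]
  obtain ⟨n, hn⟩ := exists_abs_sub_lt_of_tendsto_zero
    (tendsto_prod_one_sub_of_not_summable hx0 hx1 hxs) hβ0 (by simpa using hβ1) hε fun n => by
      rw [prod_range_succ]
      nlinarith [hP0 n, hP1 n, hx0 n, hxε n]
  refine ⟨{i ∈ range n | i.Prime ∧ a < i}, fun p hp => (mem_filter.1 hp).2.1, ?_⟩
  convert hn using 3
  rw [prod_filter]
  exact prod_congr rfl fun i _ => by simp only [x]; split_ifs <;> simp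

theorem exists_subset_sum_eq_of_le_one_add_sum_lt {ι : Type*} [DecidableEq ι] (w : ι → ℕ)
    (D : Finset ι) (hD : ∀ d ∈ D, w d ≤ 1 + ∑ e ∈ D with w e < w d, w e) {m : ℕ}
    (hm : m ≤ ∑ d ∈ D, w d) : ∃ E ⊆ D, m = ∑ e ∈ E, w e := by
  induction D using Finset.induction_on_max_value w generalizing m with
  | empty => exact ⟨∅, subset_refl _, by simpa using hm⟩
  | insert a s has hmax ih =>
    have hs : ∀ d ∈ s, w d ≤ 1 + ∑ e ∈ s with w e < w d, w e := fun d hd => by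
      simpa [filter_insert, not_lt.2 (hmax d hd)] using hD d (mem_insert_of_mem hd)
    rw [sum_insert has] at hm
    by_cases hma : w a ≤ m
    · obtain ⟨E, hE, hEm⟩ := ih hs (m := m - w a) (by omega)
      refine ⟨insert a E, insert_subset_insert a hE, ?_⟩
      rw [sum_insert fun h => has (hE h)]
      omega
    · have ha := hD a (mem_insert_self a s)
      rw [filter_insert, if_neg (lt_irrefl _)] at ha
      have hle : ∑ e ∈ s with w e < w a, w e ≤ ∑ e ∈ s, w e :=
        sum_le_sum_of_subset (filter_subset _ _)
      obtain ⟨E, hE, hEm⟩ := ih hs (m := m) (by omega)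
      exact ⟨E, hE.trans (subset_insert a s), hEm⟩

theorem fPractical_of_le_one_add_sum_lt {f : ℕ → ℕ} {n : ℕ} (hn : 0 < n)
    (h : ∀ d ∈ n.divisors, f d ≤ 1 + ∑ e ∈ n.divisors with f e < f d, f e) : FPractical f n :=
  ⟨hn, fun _ _ hm => exists_subset_sum_eq_of_le_one_add_sum_lt f _ h hm⟩

theorem ArithmeticFunction.IsMultiplicative.sum_divisors_prod_primes {R : Type*}
    [CommSemiring R] {f : ArithmeticFunction R} (hf : f.IsMultiplicative) {U : Finset ℕ}
    (hU : ∀ p ∈ U, p.Prime) : ∑ d ∈ (∏ p ∈ U, p).divisors, f d = ∏ p ∈ U, (1 + f p) := by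
  have hsq : Squarefree (∏ p ∈ U, p) :=
    squarefree_prod_of_pairwise_isCoprime
      (fun p hp q hq hpq => Nat.coprime_iff_isRelPrime.1 ((Nat.coprime_primes (hU p hp)
        (hU q hq)).2 hpq)) fun p hp => (hU p hp).squarefree
  rw [← hf.prodPrimeFactors_one_add_of_squarefree hsq, Nat.primeFactors_prod hU]

namespace ArithmeticFunction

variable {w : ℕ → ℕ}

theorem prodPrimeFactors_le_of_dvd (hw : ∀ p, 1 ≤ w p) {e m : ℕ} (he : e ∣ m) (hm : m ≠ 0) :
    prodPrimeFactors w e ≤ prodPrimeFactors w m := by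
  rw [prodPrimeFactors_apply (ne_zero_of_dvd_ne_zero hm he), prodPrimeFactors_apply hm]
  exact prod_le_prod_of_subset_of_one_le' (Nat.primeFactors_mono he hm) fun p _ _ => hw p

theorem le_prodPrimeFactors_of_mem (hw : ∀ p, 1 ≤ w p) {q e : ℕ} (hq : q ∈ e.primeFactors) :
    w q ≤ prodPrimeFactors w e := by
  rw [prodPrimeFactors_apply (Nat.mem_primeFactors.1 hq).2.2]
  exact single_le_prod' (fun p _ => hw p) hq

end ArithmeticFunction

def threeOutside (S : Finset ℕ) : ArithmeticFunction ℕ :=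
  prodPrimeFactors fun p => if p ∈ S then 1 else 3

section ThreeOutside

variable {S : Finset ℕ}

theorem isMultiplicative_threeOutside : (threeOutside S).IsMultiplicative :=
  IsMultiplicative.prodPrimeFactors _

theorem one_le_threeOutside_weight (p : ℕ) : 1 ≤ if p ∈ S then 1 else 3 := by
  split_ifs <;> norm_num

theorem threeOutside_apply {n : ℕ} (hn : n ≠ 0) :
    threeOutside S n = 3 ^ #(n.primeFactors \ S) := by
  rw [threeOutside, prodPrimeFactors_apply hn, prod_ite, prod_const_one, one_mul, prod_const,
    filter_notMem_eq_sdiff]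

theorem threeOutside_prime {p : ℕ} (hp : p.Prime) :
    threeOutside S p = if p ∈ S then 1 else 3 := by
  rw [threeOutside, prodPrimeFactors_apply hp.ne_zero, hp.primeFactors, prod_singleton]

theorem threeOutside_le_of_dvd {e m : ℕ} (he : e ∣ m) (hm : m ≠ 0) :
    threeOutside S e ≤ threeOutside S m :=
  prodPrimeFactors_le_of_dvd one_le_threeOutside_weight he hm

theorem three_le_threeOutside {q e : ℕ} (hq : q ∈ e.primeFactors) (hqS : q ∉ S) :
    3 ≤ threeOutside S e := by
  have := le_prodPrimeFactors_of_mem (one_le_threeOutside_weight (S := S)) hq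
  rwa [if_neg hqS] at this

theorem three_pow_succ_le (k : ℕ) : 3 ^ (k + 1) ≤ 1 + 2 * 4 ^ k := by
  induction k with
  | zero => norm_num
  | succ k ih => rw [pow_succ, pow_succ 4]; have := Nat.one_le_pow k 4 (by norm_num); omega

theorem threeOutside_prod_insert {p : ℕ} {V : Finset ℕ} (hp : p.Prime) (hpS : p ∈ S)
    (hV : ∀ q ∈ V, q.Prime ∧ q ∉ S) : threeOutside S (∏ q ∈ insert p V, q) = 3 ^ #V := by
  have hpV : p ∉ V := fun h => (hV p h).2 hpS
  have hU : ∀ q ∈ insert p V, q.Prime := by simpa [hp] using fun q hq => (hV q hq).1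
  rw [threeOutside, prodPrimeFactors_apply (prod_ne_zero_iff.2 fun q hq => (hU q hq).ne_zero),
    Nat.primeFactors_prod hU, prod_insert hpV, if_pos hpS, one_mul,
    prod_congr rfl fun q hq => if_neg (hV q hq).2, prod_const]

theorem sum_divisors_threeOutside_prod_insert {p : ℕ} {V : Finset ℕ} (hp : p.Prime) (hpS : p ∈ S)
    (hV : ∀ q ∈ V, q.Prime ∧ q ∉ S) :
    ∑ e ∈ (∏ q ∈ insert p V, q).divisors, threeOutside S e = 2 * 4 ^ #V := by
  have hpV : p ∉ V := fun h => (hV p h).2 hpS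
  have hU : ∀ q ∈ insert p V, q.Prime := by simpa [hp] using fun q hq => (hV q hq).1
  rw [isMultiplicative_threeOutside.sum_divisors_prod_primes hU, prod_insert hpV,
    threeOutside_prime hp, if_pos hpS, prod_congr rfl fun q hq => by
      rw [threeOutside_prime (hV q hq).1, if_neg (hV q hq).2], prod_const]

/-- If `d` has `j ≥ 1` prime factors outside `S`, then `f d = 3 ^ j`, and the divisors of
`p` times `j - 1` of those primes all have smaller weight, with total weight
`2 * 4 ^ (j - 1) ≥ 3 ^ j - 1`. -/
theorem threeOutside_le_one_add_sum_lt {n p d : ℕ} (hn : n ≠ 0) (hp : p.Prime) (hpS : p ∈ S)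
    (hpn : p ∣ n) (hd : d ∣ n) :
    threeOutside S d ≤
      1 + ∑ e ∈ n.divisors with threeOutside S e < threeOutside S d, threeOutside S e := by
  rw [threeOutside_apply (ne_zero_of_dvd_ne_zero hn hd)]
  set T := d.primeFactors \ S
  obtain hT | ⟨t, ht⟩ := T.eq_empty_or_nonempty
  · simp [hT]
  set V := T.erase t
  have hV : ∀ q ∈ V, q.Prime ∧ q ∉ S := fun q hq => by
    obtain ⟨hqd, hqS⟩ := mem_sdiff.1 (mem_of_mem_erase hq)
    exact ⟨Nat.prime_of_mem_primeFactors hqd, hqS⟩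
  have hVT : #T = #V + 1 := by rw [card_erase_add_one ht]
  have hmn : ∏ q ∈ insert p V, q ∣ n := by
    refine prod_primes_dvd n (fun q hq => ?_) fun q hq => ?_ <;>
      rcases mem_insert.1 hq with rfl | hq
    · exact hp.prime
    · exact (hV q hq).1.prime
    · exact hpn
    · exact (Nat.dvd_of_mem_primeFactors (mem_sdiff.1 (mem_of_mem_erase hq)).1).trans hd
  have hm0 : ∏ q ∈ insert p V, q ≠ 0 := ne_zero_of_dvd_ne_zero hn hmn
  have hsub : (∏ q ∈ insert p V, q).divisors ⊆ {e ∈ n.divisors | threeOutside S e < 3 ^ #T} := by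
    intro e he
    have hem := Nat.dvd_of_mem_divisors he
    refine mem_filter.2 ⟨Nat.mem_divisors.2 ⟨hem.trans hmn, hn⟩, ?_⟩
    calc threeOutside S e ≤ 3 ^ #V :=
          threeOutside_prod_insert hp hpS hV ▸ threeOutside_le_of_dvd hem hm0
      _ < 3 ^ #T := Nat.pow_lt_pow_right (by norm_num) (by omega)
  calc 3 ^ #T ≤ 1 + 2 * 4 ^ #V := hVT ▸ three_pow_succ_le #V
    _ = 1 + ∑ e ∈ (∏ q ∈ insert p V, q).divisors, threeOutside S e := by
      rw [sum_divisors_threeOutside_prod_insert hp hpS hV]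
    _ ≤ _ := by gcongr

theorem not_fPractical_threeOutside {n : ℕ} (hn : 1 < n) (hS : ∀ p ∈ S, ¬p ∣ n) :
    ¬FPractical (threeOutside S) n := by
  rintro ⟨hn0, hrep⟩
  have hbig : ∀ e ∈ n.divisors, e ≠ 1 → 3 ≤ threeOutside S e := fun e he he1 => by
    obtain ⟨q, hq, hqe⟩ := Nat.exists_prime_and_dvd he1
    have hen := Nat.dvd_of_mem_divisors he
    exact three_le_threeOutside
      (Nat.mem_primeFactors.2 ⟨hq, hqe, ne_zero_of_dvd_ne_zero hn0.ne' hen⟩)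
      fun hqS => hS q hqS (hqe.trans hen)
  have hSf : 2 ≤ Sf (threeOutside S) n := by
    have hpair : ({1, n} : Finset ℕ) ⊆ n.divisors := by
      simp [insert_subset_iff, hn0.ne']
    have := sum_le_sum_of_subset (f := threeOutside S) hpair
    rw [sum_pair hn.ne, isMultiplicative_threeOutside.map_one] at this
    have := hbig n (Nat.mem_divisors_self n hn0.ne') hn.ne'
    unfold Sf; omega
  -- `2` is not a sum of weights: `f 1 = 1` and every other weight is at least `3`
  obtain ⟨D, hD, h2⟩ := hrep 2 two_pos hSf
  by_cases hD1 : D ⊆ {1}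
  · have := sum_le_sum_of_subset (f := threeOutside S) hD1
    rw [sum_singleton, isMultiplicative_threeOutside.map_one] at this
    omega
  · obtain ⟨e, heD, he1⟩ := not_subset.1 hD1
    have := single_le_sum (f := threeOutside S) (fun _ _ => Nat.zero_le _) heD
    have := hbig e (hD heD) (by simpa using he1)
    omega

theorem fPractical_threeOutside_iff (hS : ∀ p ∈ S, p.Prime) {n : ℕ} (hn : 0 < n) :
    FPractical (threeOutside S) n ↔ n = 1 ∨ ¬(∏ p ∈ S, p).Coprime n := by
  simp only [Nat.coprime_prod_left_iff, not_forall]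
  constructor
  · intro h
    by_contra! hc
    exact not_fPractical_threeOutside (by omega)
      (fun p hp => ((hS p hp).coprime_iff_not_dvd).1 (hc.2 p hp)) h
  · rintro (rfl | ⟨p, hpS, hpn⟩)
    · refine fPractical_of_le_one_add_sum_lt one_pos fun d hd => ?_
      rw [Nat.divisors_one, mem_singleton] at hd
      rw [hd, isMultiplicative_threeOutside.map_one]
      omega
    · have hp := hS p hpS
      exact fPractical_of_le_one_add_sum_lt hn fun d hd => threeOutside_le_one_add_sum_lt hn.ne'
        hp hpS ((hp.dvd_iff_not_coprime).2 hpn) (Nat.dvd_of_mem_divisors hd)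

theorem hasDensity_fPractical_threeOutside (hS : ∀ p ∈ S, p.Prime) :
    HasDensity (FPractical (threeOutside S))
      (1 - Nat.totient (∏ p ∈ S, p) / ((∏ p ∈ S, p : ℕ) : ℝ)) := by
  set q := ∏ p ∈ S, p
  have hq : 0 < q := prod_pos fun p hp => (hS p hp).pos
  refine HasDensity.of_abs_sub_le (C := q + 1) fun N => ?_
  set c := #{m ∈ Icc 1 N | q.Coprime m}
  have hc : |(c : ℝ) - (Nat.totient q / q) * N| ≤ q := by
    have := abs_card_filter_Icc_sub_le (Nat.periodic_coprime q) hq N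
    rwa [Nat.count_eq_card_filter_range] at this
  have hcompl : #{m ∈ Icc 1 N | ¬q.Coprime m} + c = N := by
    rw [add_comm, card_filter_add_card_filter_not, Nat.card_Icc, Nat.add_sub_cancel]
  have hlow : #{m ∈ Icc 1 N | ¬q.Coprime m} ≤ #{m ∈ Icc 1 N | FPractical (threeOutside S) m} :=
    card_le_card <| monotone_filter_right _ fun m hm hcop =>
      (fPractical_threeOutside_iff hS (by simp at hm; omega)).2 (Or.inr hcop)
  have hupp : #{m ∈ Icc 1 N | FPractical (threeOutside S) m} ≤
      1 + #{m ∈ Icc 1 N | ¬q.Coprime m} := by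
    calc _ ≤ #({1} ∪ {m ∈ Icc 1 N | ¬q.Coprime m}) := card_le_card fun m hm => by
          rw [mem_filter, mem_Icc] at hm
          have := (fPractical_threeOutside_iff hS (by omega)).1 hm.2
          simp only [mem_union, mem_singleton, mem_filter, mem_Icc]
          tauto
      _ ≤ 1 + #{m ∈ Icc 1 N | ¬q.Coprime m} := card_union_le _ _
  have hlow' : (N : ℝ) ≤ #{m ∈ Icc 1 N | FPractical (threeOutside S) m} + c := by
    exact_mod_cast (by omega : N ≤ #{m ∈ Icc 1 N | FPractical (threeOutside S) m} + c)
  have hupp' : (#{m ∈ Icc 1 N | FPractical (threeOutside S) m} : ℝ) + c ≤ N + 1 := by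
    exact_mod_cast (by omega : #{m ∈ Icc 1 N | FPractical (threeOutside S) m} + c ≤ N + 1)
  rw [abs_le] at hc ⊢
  constructor <;> nlinarith [hc.1, hc.2]

end ThreeOutside

theorem totient_prod_primes_div {S : Finset ℕ} (hS : ∀ p ∈ S, p.Prime) :
    (Nat.totient (∏ p ∈ S, p) : ℝ) / ((∏ p ∈ S, p : ℕ) : ℝ) = ∏ p ∈ S, (1 - (p : ℝ)⁻¹) := by
  have h := congrArg (Rat.cast : ℚ → ℝ) (Nat.totient_eq_mul_prod_factors (∏ p ∈ S, p))
  push_cast [Nat.primeFactors_prod hS] at h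
  rw [h, Nat.cast_prod, mul_div_cancel_left₀ _
    (prod_ne_zero_iff.2 fun p hp => Nat.cast_ne_zero.2 (hS p hp).ne_zero)]

/-- The densities of the f-practical sets are dense in [0,1]. -/
theorem stmt10 (α : ℝ) (hα : α ∈ Set.Icc (0 : ℝ) 1) (ε : ℝ) (hε : 0 < ε) :
    ∃ f : ℕ → ℕ, f 1 = 1 ∧
      (∀ a b : ℕ, Nat.Coprime a b → f (a * b) = f a * f b) ∧
      (∀ p k : ℕ, p.Prime → 1 ≤ k → f (p ^ (k - 1)) ≤ f (p ^ k)) ∧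
      ∃ δ : ℝ,
        Filter.Tendsto
          (fun N : ℕ => (((Finset.Icc 1 N).filter fun m => FPractical f m).card : ℝ) / N)
          Filter.atTop (nhds δ) ∧ |δ - α| < ε := by
  obtain ⟨S, hS, hSβ⟩ :=
    exists_prod_one_sub_inv_primes_near (β := 1 - α) (by linarith [hα.2]) (by linarith [hα.1]) hε
  refine ⟨threeOutside S, isMultiplicative_threeOutside.map_one,
    fun a b hab => isMultiplicative_threeOutside.map_mul_of_coprime hab,
    fun p k hp _ => threeOutside_le_of_dvd (pow_dvd_pow p (k.sub_le 1)) (pow_ne_zero k hp.ne_zero),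
    _, hasDensity_fPractical_threeOutside hS, ?_⟩
  rw [totient_prod_primes_div hS, abs_sub_comm]
  convert hSβ using 2
  ring
end

section
/- Every even weakly φ*-practical number is practical. That is, if n is an even positive integer that is weakly φ*-practical, then every positive integer m ≤ σ(n) can be written as a sum of distinct divisors of n. -/
open Finset

/-- The unitary totient function: φ*(n) = ∏_{p^k ∥ n} (p^k - 1). -/
def phiStar (m : ℕ) : ℕ := ∏ p ∈ m.primeFactors, (p ^ m.factorization p - 1)

/-!
Stewart's criterion: if m is practical, p ∤ m and p ≤ σ(m) + 1, then every m pᵉ is practical,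
because t ≤ σ(m p^(e+1)) = σ(m pᵉ) + σ(m) p^(e+1) splits as t = b p^(e+1) + r with b ≤ σ(m) and
r ≤ σ(m pᵉ). Applied along the ordered prime factors p₁, …, p_k of n with partial products mᵢ,
it remains to see p_{i+1} ≤ σ(mᵢ) + 1. If 2 ∣ mᵢ, then φ*(d) ≤ d and φ*(2) = 1 < 2 give
S_{φ*}(mᵢ) + 1 ≤ σ(mᵢ), so the hypothesis p_{i+1} - 1 ≤ S_{φ*}(mᵢ) + 1 suffices. Otherwise 2
comes at or after p_{i+1}, so φ*(p_{i+1}) ≤ φ*(2) = 1, i.e. p_{i+1} ≤ 2.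
-/

def IsPractical (n : ℕ) : Prop :=
  ∀ t ≤ ∑ d ∈ n.divisors, d, ∃ D ⊆ n.divisors, t = ∑ d ∈ D, d

theorem isPractical_one : IsPractical 1 := by
  intro t ht
  rw [Nat.divisors_one, sum_singleton] at ht
  interval_cases t
  · exact ⟨∅, empty_subset _, rfl⟩
  · exact ⟨{1}, subset_rfl, rfl⟩

theorem exists_eq_mul_add_of_le_add_mul {S q a t : ℕ} (hq : q ≤ S + 1) (ht : t ≤ S + a * q) :
    ∃ b ≤ a, ∃ r ≤ S, t = b * q + r := by
  induction a generalizing t with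
  | zero => exact ⟨0, le_rfl, t, by simpa using ht, by simp⟩
  | succ a ih =>
    by_cases h : t ≤ S + a * q
    · obtain ⟨b, hb, r, hr, rfl⟩ := ih h
      exact ⟨b, hb.trans a.le_succ, r, hr, rfl⟩
    · obtain ⟨b, hb, r, hr, htr⟩ := ih (t := t - q) (by rw [add_mul] at ht; omega)
      exact ⟨b + 1, by omega, r, hr, by rw [add_mul] at ht ⊢; omega⟩

theorem sum_divisors_mul_prime_pow_succ {m p : ℕ} (hp : p.Prime) (hmp : m.Coprime p) (e : ℕ) :
    ∑ d ∈ (m * p ^ (e + 1)).divisors, d =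
      ∑ d ∈ (m * p ^ e).divisors, d + (∑ d ∈ m.divisors, d) * p ^ (e + 1) := by
  rw [Nat.Coprime.sum_divisors_mul (hmp.pow_right _),
    Nat.Coprime.sum_divisors_mul (hmp.pow_right _), Nat.sum_divisors_prime_pow hp,
    Nat.sum_divisors_prime_pow hp, sum_range_succ, mul_add]

theorem prime_pow_le_sum_divisors_mul_add_one {m p : ℕ} (hp : p.Prime) (hmp : m.Coprime p)
    (hpm : p ≤ ∑ d ∈ m.divisors, d + 1) (e : ℕ) :
    p ^ (e + 1) ≤ ∑ d ∈ (m * p ^ e).divisors, d + 1 := by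
  obtain ⟨x, rfl⟩ : ∃ x, p = x + 1 := ⟨p - 1, (Nat.sub_add_cancel hp.one_le).symm⟩
  rw [Nat.Coprime.sum_divisors_mul (hmp.pow_right _), Nat.sum_divisors_prime_pow hp,
    ← geom_sum_mul_add x (e + 1), mul_comm]
  gcongr
  omega

theorem IsPractical.mul_prime_pow_succ {m p e : ℕ} (hp : p.Prime) (hmp : m.Coprime p)
    (hm : IsPractical m) (hme : IsPractical (m * p ^ e))
    (hq : p ^ (e + 1) ≤ ∑ d ∈ (m * p ^ e).divisors, d + 1) :
    IsPractical (m * p ^ (e + 1)) := by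
  set q := p ^ (e + 1)
  intro t ht
  rw [sum_divisors_mul_prime_pow_succ hp hmp] at ht
  obtain ⟨b, hb, r, hr, rfl⟩ := exists_eq_mul_add_of_le_add_mul hq ht
  obtain ⟨B, hBm, rfl⟩ := hm b hb
  obtain ⟨R, hRme, rfl⟩ := hme r hr
  have hq0 : q ≠ 0 := pow_ne_zero _ hp.ne_zero
  have hm0 : m ≠ 0 := by
    rintro rfl
    exact hp.one_lt.ne' (Nat.coprime_zero_left p |>.mp hmp)
  have hmq0 : m * q ≠ 0 := mul_ne_zero hm0 hq0
  have hdisj : Disjoint R (B.image (· * q)) := by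
    refine disjoint_right.mpr fun x hx hxR => ?_
    obtain ⟨d, -, rfl⟩ := mem_image.mp hx
    have hqme : q ∣ m * p ^ e := (dvd_mul_left q d).trans (Nat.dvd_of_mem_divisors (hRme hxR))
    have : q ∣ p ^ e := (hmp.pow_right (e + 1)).symm.dvd_of_dvd_mul_left hqme
    exact absurd ((Nat.pow_dvd_pow_iff_le_right hp.one_lt).mp this) (by omega)
  refine ⟨R ∪ B.image (· * q), union_subset ?_ ?_, ?_⟩
  · exact hRme.trans <|
      Nat.divisors_subset_of_dvd hmq0 (mul_dvd_mul_left m (pow_dvd_pow p e.le_succ))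
  · intro x hx
    obtain ⟨d, hd, rfl⟩ := mem_image.mp hx
    exact Nat.mem_divisors.mpr ⟨mul_dvd_mul (Nat.dvd_of_mem_divisors (hBm hd)) dvd_rfl, hmq0⟩
  · rw [sum_union hdisj, sum_image fun _ _ _ _ h => Nat.eq_of_mul_eq_mul_right (by positivity) h,
      sum_mul, add_comm]

theorem IsPractical.mul_prime_pow {m p : ℕ} (hp : p.Prime) (hmp : m.Coprime p)
    (hm : IsPractical m) (hpm : p ≤ ∑ d ∈ m.divisors, d + 1) (e : ℕ) : IsPractical (m * p ^ e) := by
  induction e with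
  | zero => simpa using hm
  | succ e ih =>
    exact hm.mul_prime_pow_succ hp hmp ih (prime_pow_le_sum_divisors_mul_add_one hp hmp hpm e)

theorem List.Nodup.getElem_notMem_take {α : Type*} {l : List α} (hnd : l.Nodup) {i : ℕ}
    (hi : i < l.length) : l[i] ∉ l.take i := fun h =>
  List.disjoint_take_drop hnd le_rfl h
    (by rw [List.drop_eq_getElem_cons hi]; exact List.mem_cons_self)

theorem isPractical_prod_map_pow {l : List ℕ} (k : ℕ → ℕ) (hnd : l.Nodup)
    (hprime : ∀ p ∈ l, p.Prime)
    (hle : ∀ (i : ℕ) (hi : i < l.length),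
      l[i] ≤ ∑ d ∈ ((l.take i).map fun p => p ^ k p).prod.divisors, d + 1) :
    IsPractical (l.map fun p => p ^ k p).prod := by
  suffices ∀ i ≤ l.length, IsPractical ((l.take i).map fun p => p ^ k p).prod by
    simpa using this l.length le_rfl
  intro i
  induction i with
  | zero => exact fun _ => by simpa using isPractical_one
  | succ i ih =>
    intro (hi : i < l.length)
    have hp := hprime _ (l.getElem_mem hi)
    have hcop : ((l.take i).map fun p => p ^ k p).prod.Coprime l[i] := by
      refine Nat.coprime_list_prod_left_iff.mpr fun x hx => ?_
      obtain ⟨q, hq, rfl⟩ := List.mem_map.mp hx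
      have hne : q ≠ l[i] := fun h => hnd.getElem_notMem_take hi (h ▸ hq)
      exact ((Nat.coprime_primes (hprime q (List.take_subset _ _ hq)) hp).mpr hne).pow_left _
    rw [List.take_add_one, List.map_append, List.prod_append, List.getElem?_eq_getElem hi]
    simpa using (ih hi.le).mul_prime_pow hp hcop (hle i hi) (k l[i])

theorem phiStar_le_self {d : ℕ} (hd : d ≠ 0) : phiStar d ≤ d := by
  conv_rhs => rw [Nat.prod_primeFactors_pow_factorization hd]
  exact prod_le_prod' fun p _ => Nat.sub_le _ _

theorem phiStar_prime {p : ℕ} (hp : p.Prime) : phiStar p = p - 1 := by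
  simp [phiStar, hp.primeFactors, hp.factorization_self]

theorem Sf_phiStar_add_one_le {m : ℕ} (hm : m ≠ 0) (h2 : 2 ∣ m) :
    Sf phiStar m + 1 ≤ ∑ d ∈ m.divisors, d := by
  have h2m : 2 ∈ m.divisors := Nat.mem_divisors.mpr ⟨h2, hm⟩
  have hle : ∑ d ∈ m.divisors.erase 2, phiStar d ≤ ∑ d ∈ m.divisors.erase 2, d :=
    sum_le_sum fun d hd => phiStar_le_self (Nat.pos_of_mem_divisors (mem_of_mem_erase hd)).ne'
  rw [Sf, ← add_sum_erase _ _ h2m, ← add_sum_erase _ _ h2m, phiStar_prime Nat.prime_two]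
  omega

theorem getElem_le_sum_divisors_prod_take_add_one {l : List ℕ} (k : ℕ → ℕ)
    (hprime : ∀ p ∈ l, p.Prime) (h2 : 2 ∈ l) (hk2 : k 2 ≠ 0)
    (hsort : l.Pairwise fun p q => phiStar p ≤ phiStar q) {i : ℕ} (hi : i < l.length)
    (hcond : phiStar l[i] ≤ Sf phiStar ((l.take i).map fun p => p ^ k p).prod + 1) :
    l[i] ≤ ∑ d ∈ ((l.take i).map fun p => p ^ k p).prod.divisors, d + 1 := by
  set m := ((l.take i).map fun p => p ^ k p).prod
  have hm : m ≠ 0 := List.prod_ne_zero fun h0 => by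
    obtain ⟨p, hp, hp0⟩ := List.mem_map.mp h0
    exact pow_ne_zero _ (hprime p (List.take_subset _ _ hp)).ne_zero hp0
  rw [phiStar_prime (hprime _ (l.getElem_mem hi))] at hcond
  by_cases h2i : 2 ∈ l.take i
  · have hm2 : 2 ∣ m := (dvd_pow_self 2 hk2).trans (List.dvd_prod (List.mem_map_of_mem h2i))
    have := Sf_phiStar_add_one_le hm hm2
    omega
  · have h2d : 2 ∈ l.drop i := by
      rw [← List.take_append_drop i l, List.mem_append] at h2
      exact h2.resolve_left h2i
    obtain ⟨j, hj, hj2⟩ := List.mem_drop_iff_getElem.mp h2d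
    have hphi : phiStar l[i] ≤ phiStar l[i + j] := by
      rcases j.eq_zero_or_pos with rfl | hj0
      · rfl
      · exact List.pairwise_iff_getElem.mp hsort _ _ _ _ (by omega)
    rw [hj2, phiStar_prime Nat.prime_two, phiStar_prime (hprime _ (l.getElem_mem hi))] at hphi
    have hmσ : m ≤ ∑ d ∈ m.divisors, d :=
      single_le_sum (f := fun d => d) (fun _ _ => Nat.zero_le _) (Nat.mem_divisors_self m hm)
    omega

/-- Every even weakly φ*-practical number is practical: every positive integer
m ≤ σ(n) is a sum of distinct divisors of n. -/
theorem stmt11 (n : ℕ) (heven : 2 ∣ n) (hweak : WeaklyFPractical phiStar n) :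
    ∀ m : ℕ, 0 < m → m ≤ ∑ d ∈ n.divisors, d →
      ∃ D : Finset ℕ, D ⊆ n.divisors ∧ m = ∑ d ∈ D, d := by
  obtain ⟨hn, l, hnd, htf, hsort, hcond⟩ := hweak
  have hprime : ∀ p ∈ l, p.Prime := fun p hp =>
    Nat.prime_of_mem_primeFactors (htf ▸ List.mem_toFinset.mpr hp)
  have h2 : 2 ∈ l := by
    rw [← List.mem_toFinset, htf]
    exact Nat.mem_primeFactors.mpr ⟨Nat.prime_two, heven, hn.ne'⟩
  have hk2 : n.factorization 2 ≠ 0 := (Nat.prime_two.factorization_pos_of_dvd hn.ne' heven).ne'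
  have hprod : (l.map fun p => p ^ n.factorization p).prod = n := by
    rw [← List.prod_toFinset _ hnd, htf, ← Nat.prod_primeFactors_pow_factorization hn.ne']
  have hpractical : IsPractical n := hprod ▸ isPractical_prod_map_pow _ hnd hprime fun i hi =>
    getElem_le_sum_divisors_prod_take_add_one _ hprime h2 hk2 hsort hi (hcond ⟨i, hi⟩)
  exact fun m _ hm => hpractical m hm
end

section
/- Suppose w_1, ..., w_t and u_1, ..., u_t are positive integers with w_1 > w_2 > ··· > w_t. Let S = ∑_{i=1}^t w_i and T = ∑_{i=1}^t u_i·w_i. Suppose that every positive integer up to S is a subset sum of the w_i's (i.e., equals ∑_{i ∈ A} w_i for some subset A of {1,...,t}). Then every positive integer m ≤ T can be written in the form m = ∑_{i=1}^t a_i·w_i where each a_i is an integer with 0 ≤ a_i ≤ u_i. -/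
/-!
Call `m` a bounded combination for multiplicities `u` if `m = ∑ aᵢ wᵢ` with `a ≤ u`. For
`u = 1` these are exactly the subset sums, so by hypothesis they fill `[0, ∑ wᵢ]`. Raising one
multiplicity `u_j` by one lets us add `w_j` to any bounded combination, so once `[0, ∑ uᵢ wᵢ]`
is filled and `w_j ≤ ∑ uᵢ wᵢ` the two intervals `[0, ∑ uᵢ wᵢ]` and `[w_j, ∑ uᵢ wᵢ + w_j]`
overlap and their union fills the new range. Every `u ≥ 1` is reached from `1` by such steps.
-/

open Finset

section BoundedCombination

variable {ι : Type*} [Fintype ι]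

def IsBoundedCombination (w u : ι → ℕ) (m : ℕ) : Prop :=
  ∃ a ≤ u, m = ∑ i, a i * w i

variable {w u : ι → ℕ}

lemma IsBoundedCombination.mono {v : ι → ℕ} {m : ℕ} (h : IsBoundedCombination w u m)
    (huv : u ≤ v) : IsBoundedCombination w v m :=
  let ⟨a, ha, hm⟩ := h
  ⟨a, ha.trans huv, hm⟩

lemma isBoundedCombination_zero : IsBoundedCombination w u 0 :=
  ⟨0, fun i => Nat.zero_le (u i), by simp⟩

lemma isBoundedCombination_of_subsetSum [DecidableEq ι] {m : ℕ} {A : Finset ι}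
    (hu : 1 ≤ u) (hA : m = ∑ i ∈ A, w i) : IsBoundedCombination w u m := by
  refine ⟨fun i => if i ∈ A then 1 else 0, fun i => ?_, by simp [hA, ite_mul]⟩
  dsimp only
  split_ifs
  exacts [hu i, Nat.zero_le _]

lemma sum_add_single_mul [DecidableEq ι] (j : ι) :
    ∑ i, (u + Pi.single j 1 : ι → ℕ) i * w i = ∑ i, u i * w i + w j := by
  simp [add_mul, sum_add_distrib, Pi.single_apply, ite_mul]

lemma isBoundedCombination_add_single [DecidableEq ι] {j : ι}
    (hu : ∀ m ≤ ∑ i, u i * w i, IsBoundedCombination w u m) (hj : w j ≤ ∑ i, u i * w i) :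
    ∀ m ≤ ∑ i, (u + Pi.single j 1 : ι → ℕ) i * w i,
      IsBoundedCombination w (u + Pi.single j 1) m := by
  intro m hm
  rw [sum_add_single_mul] at hm
  by_cases hlow : m ≤ ∑ i, u i * w i
  · exact (hu m hlow).mono le_self_add
  · obtain ⟨a, ha, hma⟩ := hu (m - w j) (by omega)
    refine ⟨a + Pi.single j 1, add_le_add_left ha _, ?_⟩
    rw [sum_add_single_mul, ← hma]
    omega

lemma sum_le_sum_mul_of_one_le (hu : 1 ≤ u) : ∑ i, w i ≤ ∑ i, u i * w i :=
  sum_le_sum fun i _ => Nat.le_mul_of_pos_left _ (hu i)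

lemma exists_eq_add_single_of_one_le [DecidableEq ι] (hu : 1 ≤ u) (hne : u ≠ 1) :
    ∃ j, ∃ u' : ι → ℕ, 1 ≤ u' ∧ u = u' + Pi.single j 1 := by
  obtain ⟨j, hj⟩ : ∃ j, u j ≠ 1 := by
    by_contra! h
    exact hne (funext h)
  have hui : ∀ i, 1 ≤ u i := hu
  refine ⟨j, u - Pi.single j 1, fun i => ?_, funext fun i => ?_⟩ <;>
    rcases eq_or_ne i j with rfl | hij
  · simp only [Pi.sub_apply, Pi.single_eq_same, Pi.one_apply]
    have := hui i
    omega
  · simpa [hij] using hui i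
  · simpa using (Nat.sub_add_cancel (hui i)).symm
  · simp [hij]

lemma isBoundedCombination_one_of_subsetSums
    (hsub : ∀ m, 0 < m → m ≤ ∑ i, w i → ∃ A : Finset ι, m = ∑ i ∈ A, w i) :
    ∀ m ≤ ∑ i, (1 : ι → ℕ) i * w i, IsBoundedCombination w 1 m := by
  classical
  intro m hm
  rcases Nat.eq_zero_or_pos m with rfl | hm0
  · exact isBoundedCombination_zero
  · obtain ⟨A, hA⟩ := hsub m hm0 (by simpa using hm)
    exact isBoundedCombination_of_subsetSum le_rfl hA

theorem isBoundedCombination_of_subsetSums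
    (hsub : ∀ m, 0 < m → m ≤ ∑ i, w i → ∃ A : Finset ι, m = ∑ i ∈ A, w i)
    (hu : 1 ≤ u) : ∀ m ≤ ∑ i, u i * w i, IsBoundedCombination w u m := by
  classical
  induction u using WellFoundedLT.induction with
  | _ u ih =>
  by_cases hone : u = 1
  · exact hone ▸ isBoundedCombination_one_of_subsetSums hsub
  obtain ⟨j, u', hu', rfl⟩ := exists_eq_add_single_of_one_le hu hone
  have hlt : u' < u' + Pi.single j 1 := lt_add_of_pos_right u' (Pi.single_pos.mpr one_pos)
  have hwj : w j ≤ ∑ i, u' i * w i :=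
    (single_le_sum (fun i _ => Nat.zero_le (w i)) (mem_univ j)).trans
      (sum_le_sum_mul_of_one_le hu')
  exact isBoundedCombination_add_single (ih u' hlt hu') hwj

end BoundedCombination

theorem stmt14_general (t : ℕ) (w u : Fin t → ℕ)
    (hupos : ∀ i, 0 < u i)
    (S T : ℕ) (hS : S = ∑ i, w i) (hT : T = ∑ i, u i * w i)
    (hsub : ∀ m : ℕ, 0 < m → m ≤ S → ∃ A : Finset (Fin t), m = ∑ i ∈ A, w i) :
    ∀ m : ℕ, 0 < m → m ≤ T →
      ∃ a : Fin t → ℕ, (∀ i, a i ≤ u i) ∧ m = ∑ i, a i * w i := by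
  subst hS hT
  exact fun m _ hm => isBoundedCombination_of_subsetSums hsub hupos m hm

/-- If w_1 > w_2 > ⋯ > w_t are positive integers, u_1, ..., u_t are positive integers,
S = ∑ w_i, T = ∑ u_i w_i, and each positive integer up to S is a subset sum of the w_i's,
then each positive m ≤ T can be written as m = ∑ a_i w_i with 0 ≤ a_i ≤ u_i. -/
theorem stmt14 (t : ℕ) (w u : Fin t → ℕ)
    (hwpos : ∀ i, 0 < w i) (hupos : ∀ i, 0 < u i)
    (hanti : ∀ i j : Fin t, i < j → w j < w i)
    (S T : ℕ) (hS : S = ∑ i, w i) (hT : T = ∑ i, u i * w i)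
    (hsub : ∀ m : ℕ, 0 < m → m ≤ S → ∃ A : Finset (Fin t), m = ∑ i ∈ A, w i) :
    ∀ m : ℕ, 0 < m → m ≤ T →
      ∃ a : Fin t → ℕ, (∀ i, a i ≤ u i) ∧ m = ∑ i, a i * w i :=
  stmt14_general t w u hupos S T hS hT hsub
end

section
/- Let f : ℕ → ℕ be an additive function (f(1) = 0 and f(ab) = f(a) + f(b) whenever gcd(a,b) = 1) with f(p) ≥ 1 for every prime p and f(p^{k-1}) ≤ f(p^k) for every prime p and integer k ≥ 1. Let n = p_1^{e_1}···p_k^{e_k} be a positive integer with distinct primes p_i. Then n is f-practical if and only if for every 1 ≤ i ≤ k and every 1 ≤ e ≤ e_i, the inequality f(p_i^e) ≤ 1 + ∑_{d | n, f(d) < f(p_i^e)} f(d) holds. -/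
open Finset

open scoped Classical

/-!
A finite family of natural numbers `g x` represents every integer up to its total as a
sub-sum exactly when each member is at most one more than the sum of the strictly smaller
members: necessity by trying to represent that sum plus one, sufficiency by induction,
adding the largest member last. For the divisors of `n` and additive `f`, the condition at a
divisor `p ^ a * e` with `e > 1` coprime to `p` follows from the one at `p ^ a`, since the
larger of `f (p ^ a)` and `f e` lies strictly below `f (p ^ a * e)` and is not yet counted
among the divisors below `f (p ^ a)`.
-/

section SubsetSums

variable {α : Type*} {s : Finset α} {g : α → ℕ}

theorem Finset.exists_subset_sum_eq_of_forall_le_one_add_sum_filter_lt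
    (hs : ∀ x ∈ s, g x ≤ 1 + ∑ d ∈ s with g d < g x, g d)
    {m : ℕ} (hm : m ≤ ∑ d ∈ s, g d) :
    ∃ D ⊆ s, m = ∑ d ∈ D, g d := by
  induction s using Finset.induction_on_max_value g generalizing m with
  | empty => exact ⟨∅, subset_refl _, by simpa using hm⟩
  | insert a s ha hmax ih =>
    have hs' : ∀ x ∈ s, g x ≤ 1 + ∑ d ∈ s with g d < g x, g d := fun x hx => by
      simpa [filter_insert, (hmax x hx).not_gt] using hs x (mem_insert_of_mem hx)
    rw [sum_insert ha] at hm
    by_cases hms : m ≤ ∑ d ∈ s, g d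
    · obtain ⟨D, hD, rfl⟩ := ih hs' hms
      exact ⟨D, hD.trans (subset_insert a s), rfl⟩
    · have hga : g a ≤ 1 + ∑ d ∈ s with g d < g a, g d := by
        simpa [filter_insert] using hs a (mem_insert_self a s)
      have hsmall := sum_le_sum_of_subset (f := g) (filter_subset (g · < g a) s)
      obtain ⟨D, hD, hDm⟩ := ih hs' (m := m - g a) (by omega)
      refine ⟨insert a D, insert_subset_insert a hD, ?_⟩
      rw [sum_insert fun h => ha (hD h)]
      omega

theorem Finset.le_one_add_sum_filter_lt_of_forall_exists_subset_sum_eq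
    (hs : ∀ m, 0 < m → m ≤ ∑ d ∈ s, g d → ∃ D ⊆ s, m = ∑ d ∈ D, g d)
    {x : α} (hx : x ∈ s) :
    g x ≤ 1 + ∑ d ∈ s with g d < g x, g d := by
  by_contra! hlt
  have hxs : g x ≤ ∑ d ∈ s, g d := single_le_sum (fun _ _ => Nat.zero_le _) hx
  obtain ⟨D, hD, hDm⟩ := hs (1 + ∑ d ∈ s with g d < g x, g d) (by omega) (by omega)
  by_cases hlarge : ∃ d ∈ D, g x ≤ g d
  · obtain ⟨d, hd, hxd⟩ := hlarge
    have hgd := single_le_sum (fun _ _ => Nat.zero_le _) hd (f := g)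
    omega
  · have hD_small : ∑ d ∈ D, g d ≤ ∑ d ∈ s with g d < g x, g d :=
      sum_le_sum_of_subset fun d hd =>
        mem_filter.2 ⟨hD hd, not_le.1 fun h => hlarge ⟨d, hd, h⟩⟩
    omega

theorem Finset.sum_filter_lt_add_le_sum_filter_lt {c c' : ℕ} {z : α} (hz : z ∈ s)
    (hcz : c ≤ g z) (hzc : g z < c') :
    ∑ d ∈ s with g d < c, g d + g z ≤ ∑ d ∈ s with g d < c', g d := by
  rw [add_comm, ← sum_insert (s := s.filter (g · < c)) (by simp [hcz])]
  refine sum_le_sum_of_subset fun d hd => ?_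
  rcases mem_insert.1 hd with rfl | hd
  · exact mem_filter.2 ⟨hz, hzc⟩
  · exact mem_filter.2 ⟨(mem_filter.1 hd).1, (mem_filter.1 hd).2.trans_le (by omega)⟩

theorem Finset.add_le_one_add_sum_filter_lt {x y : α} (hx : x ∈ s) (hy : y ∈ s)
    (hxs : g x ≤ 1 + ∑ d ∈ s with g d < g x, g d) (hgx : 0 < g x) (hgy : 0 < g y) :
    g x + g y ≤ 1 + ∑ d ∈ s with g d < g x + g y, g d := by
  rcases le_total (g y) (g x) with hyx | hxy
  · have hsum := sum_filter_lt_add_le_sum_filter_lt hx le_rfl (by omega : g x < g x + g y)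
    omega
  · have hsum := sum_filter_lt_add_le_sum_filter_lt hy hxy (by omega : g y < g x + g y)
    omega

end SubsetSums

theorem Nat.exists_prime_pow_mul_coprime {d : ℕ} (hd : 2 ≤ d) :
    ∃ p a e, p.Prime ∧ 1 ≤ a ∧ (p ^ a).Coprime e ∧ p ^ a * e = d := by
  have hp := Nat.minFac_prime (by omega : d ≠ 1)
  exact ⟨d.minFac, d.factorization d.minFac, ordCompl[d.minFac] d, hp,
    hp.factorization_pos_of_dvd (by omega) d.minFac_dvd,
    (Nat.coprime_ordCompl hp (by omega)).pow_left _, Nat.ordProj_mul_ordCompl_eq_self d _⟩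

section AdditiveFunction

variable {f : ℕ → ℕ}

theorem one_le_apply_prime_pow (hfp : ∀ p : ℕ, p.Prime → 1 ≤ f p)
    (hmono : ∀ p k : ℕ, p.Prime → 1 ≤ k → f (p ^ (k - 1)) ≤ f (p ^ k))
    {p a : ℕ} (hp : p.Prime) (ha : 1 ≤ a) : 1 ≤ f (p ^ a) := by
  have hmono_pow : Monotone fun k => f (p ^ k) :=
    monotone_nat_of_le_succ fun k => by simpa using hmono p (k + 1) hp (by omega)
  exact (hfp p hp).trans (by simpa using hmono_pow ha)

theorem one_le_apply_of_two_le (hadd : ∀ a b : ℕ, Nat.Coprime a b → f (a * b) = f a + f b)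
    (hfp : ∀ p : ℕ, p.Prime → 1 ≤ f p)
    (hmono : ∀ p k : ℕ, p.Prime → 1 ≤ k → f (p ^ (k - 1)) ≤ f (p ^ k))
    {m : ℕ} (hm : 2 ≤ m) : 1 ≤ f m := by
  obtain ⟨p, a, e, hp, ha, hcop, rfl⟩ := Nat.exists_prime_pow_mul_coprime hm
  rw [hadd _ _ hcop]
  have hpa := one_le_apply_prime_pow hfp hmono hp ha
  omega

theorem le_one_add_sum_filter_lt_of_mem_divisors
    (hadd : ∀ a b : ℕ, Nat.Coprime a b → f (a * b) = f a + f b)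
    (hfp : ∀ p : ℕ, p.Prime → 1 ≤ f p)
    (hmono : ∀ p k : ℕ, p.Prime → 1 ≤ k → f (p ^ (k - 1)) ≤ f (p ^ k))
    {n : ℕ} (hn : n ≠ 0)
    (hcond : ∀ p ∈ n.primeFactors, ∀ e : ℕ, 1 ≤ e → e ≤ n.factorization p →
      f (p ^ e) ≤ 1 + ∑ d ∈ n.divisors with f d < f (p ^ e), f d)
    {d : ℕ} (hd : d ∈ n.divisors) :
    f d ≤ 1 + ∑ d' ∈ n.divisors with f d' < f d, f d' := by
  have hdn := Nat.dvd_of_mem_divisors hd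
  obtain rfl | hd2 := (show 1 ≤ d from Nat.pos_of_mem_divisors hd).eq_or_lt
  · have hf_one : f 1 = 0 := by simpa using hadd 1 1 (Nat.coprime_one_left 1)
    omega
  obtain ⟨p, a, e, hp, ha, hcop, rfl⟩ := Nat.exists_prime_pow_mul_coprime hd2
  have hpa : p ^ a ∣ n := (Dvd.intro e rfl).trans hdn
  have hpa_le := hcond p
    (Nat.mem_primeFactors.2 ⟨hp, (dvd_pow_self p (by omega)).trans hpa, hn⟩) a ha
    ((hp.pow_dvd_iff_le_factorization hn).1 hpa)
  obtain rfl | he2 :=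
    (show 1 ≤ e from Nat.pos_of_mul_pos_left (Nat.pos_of_mem_divisors hd)).eq_or_lt
  · simpa using hpa_le
  rw [hadd _ _ hcop]
  exact add_le_one_add_sum_filter_lt (Nat.mem_divisors.2 ⟨hpa, hn⟩)
    (Nat.mem_divisors.2 ⟨(Dvd.intro_left _ rfl).trans hdn, hn⟩) hpa_le
    (one_le_apply_prime_pow hfp hmono hp ha) (one_le_apply_of_two_le hadd hfp hmono he2)

end AdditiveFunction

theorem stmt17_general (f : ℕ → ℕ)
    (hadd : ∀ a b : ℕ, Nat.Coprime a b → f (a * b) = f a + f b)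
    (hfp : ∀ p : ℕ, p.Prime → 1 ≤ f p)
    (hmono : ∀ p k : ℕ, p.Prime → 1 ≤ k → f (p ^ (k - 1)) ≤ f (p ^ k))
    (n : ℕ) (hn : 0 < n) :
    FPractical f n ↔
      ∀ p ∈ n.primeFactors, ∀ e : ℕ, 1 ≤ e → e ≤ n.factorization p →
        f (p ^ e) ≤ 1 + ∑ d ∈ n.divisors.filter fun d => f d < f (p ^ e), f d := by
  constructor
  · rintro ⟨-, hrep⟩ p hp e - he
    have hpe : p ^ e ∣ n :=
      ((Nat.prime_of_mem_primeFactors hp).pow_dvd_iff_le_factorization hn.ne').2 he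
    exact le_one_add_sum_filter_lt_of_forall_exists_subset_sum_eq hrep
      (Nat.mem_divisors.2 ⟨hpe, hn.ne'⟩)
  · intro hcond
    refine ⟨hn, fun m _ hm => exists_subset_sum_eq_of_forall_le_one_add_sum_filter_lt ?_ hm⟩
    exact fun d hd => le_one_add_sum_filter_lt_of_mem_divisors hadd hfp hmono hn.ne' hcond hd

/-- Naive criterion for additive functions: n is f-practical iff
f(p^e) ≤ 1 + ∑_{d ∣ n, f(d) < f(p^e)} f(d) for every prime power p^e with p^e ∥-dividing n. -/
theorem stmt17 (f : ℕ → ℕ) (hf1 : f 1 = 0)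
    (hadd : ∀ a b : ℕ, Nat.Coprime a b → f (a * b) = f a + f b)
    (hfp : ∀ p : ℕ, p.Prime → 1 ≤ f p)
    (hmono : ∀ p k : ℕ, p.Prime → 1 ≤ k → f (p ^ (k - 1)) ≤ f (p ^ k))
    (n : ℕ) (hn : 0 < n) :
    FPractical f n ↔
      ∀ p ∈ n.primeFactors, ∀ e : ℕ, 1 ≤ e → e ≤ n.factorization p →
        f (p ^ e) ≤ 1 + ∑ d ∈ n.divisors.filter fun d => f d < f (p ^ e), f d :=
  stmt17_general f hadd hfp hmono n hn
end

section
/- Let f : ℕ → ℕ be an additive function (f(1) = 0 and f(ab) = f(a) + f(b) whenever gcd(a,b) = 1) with f(p) ≥ 1 for every prime p and f(p^{k-1}) ≤ f(p^k) for every prime p and integer k ≥ 1. Then every positive integer is f-practical if and only if f(p^k) ≤ 1 + ∑_{i=0}^{k-1} f(p^i) holds for every prime p and every integer k ≥ 1. -/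
open Finset

/-!
A finite family of weights is subset-sum complete (every `m` up to the total weight is the
weight of a subfamily) as soon as it can be built up by adding elements each weighing at most
one more than the total so far. The divisors of `p ^ (k + 1) * n` (with `p ∤ n`) are those of
`p ^ k * n` together with the `p ^ (k + 1) * d`, `d ∣ n`, and additivity with the hypothesis gives
`f (p ^ (k + 1) * d) ≤ 1 + ∑ i ≤ k, f (p ^ i) + f d ≤ 1 + ∑ i ≤ k, f (p ^ i * d)`,
which is at most `1 + S_f (p ^ k * n)`.
Conversely, if `f (p ^ k) > 1 + ∑ i < k, f (p ^ i)`, then `1 + ∑ i < k, f (p ^ i)` is not a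
subset sum of the divisors of `p ^ k`.
-/

def SubsetSumComplete {α : Type*} (f : α → ℕ) (D : Finset α) : Prop :=
  ∀ m ≤ ∑ d ∈ D, f d, ∃ T ⊆ D, m = ∑ d ∈ T, f d

namespace SubsetSumComplete

variable {α : Type*} [DecidableEq α] {f : α → ℕ} {D E : Finset α} {a : α}

theorem insert (h : SubsetSumComplete f D) (ha : a ∉ D) (hfa : f a ≤ 1 + ∑ d ∈ D, f d) :
    SubsetSumComplete f (insert a D) := by
  intro m hm
  rw [sum_insert ha] at hm
  by_cases hmD : m ≤ ∑ d ∈ D, f d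
  · obtain ⟨T, hTD, rfl⟩ := h m hmD
    exact ⟨T, hTD.trans (subset_insert a D), rfl⟩
  · obtain ⟨T, hTD, hT⟩ := h (m - f a) (by omega)
    refine ⟨Insert.insert a T, insert_subset_insert a hTD, ?_⟩
    rw [sum_insert fun haT => ha (hTD haT), ← hT]
    omega

theorem union (h : SubsetSumComplete f D) (hE : ∀ a ∈ E, f a ≤ 1 + ∑ d ∈ D, f d)
    (hDE : Disjoint D E) : SubsetSumComplete f (D ∪ E) := by
  induction E using Finset.induction_on with
  | empty => simpa using h
  | @insert a E haE ih =>
    rw [union_insert]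
    have haD : a ∉ D := disjoint_right.mp hDE (mem_insert_self a E)
    have hDE' := hDE.mono_right (subset_insert a E)
    refine (ih (fun b hb => hE b (mem_insert_of_mem hb)) hDE').insert (by simp [haD, haE]) ?_
    have hDsub := sum_le_sum_of_subset (f := f) (subset_union_left (s₁ := D) (s₂ := E))
    have := hE a (mem_insert_self a E)
    omega

end SubsetSumComplete

theorem SubsetSumComplete.fPractical {f : ℕ → ℕ} {n : ℕ}
    (h : SubsetSumComplete f n.divisors) (hn : 0 < n) : FPractical f n :=
  ⟨hn, fun m _ hm => h m hm⟩

theorem subsetSumComplete_divisors_one {f : ℕ → ℕ} (hf1 : f 1 = 0) :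
    SubsetSumComplete f (Nat.divisors 1) := by
  intro m hm
  exact ⟨∅, empty_subset _, by simpa [hf1] using hm⟩

theorem Nat.divisors_prime_pow_succ {p : ℕ} (hp : p.Prime) (k : ℕ) :
    (p ^ (k + 1)).divisors = insert (p ^ (k + 1)) (p ^ k).divisors := by
  rw [Nat.divisors_prime_pow hp, Nat.divisors_prime_pow hp, range_add_one, map_insert]
  rfl

theorem Nat.divisors_prime_pow_succ_mul {p n : ℕ} (hp : p.Prime) (hn : n ≠ 0) (k : ℕ) :
    (p ^ (k + 1) * n).divisors = (p ^ k * n).divisors ∪ n.divisors.image (p ^ (k + 1) * ·) := by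
  have hpk : p ^ k * n ≠ 0 := by positivity [hp.pos]
  have hpk1 : p ^ (k + 1) * n ≠ 0 := by positivity [hp.pos]
  ext x
  simp only [Nat.mem_divisors, mem_union, mem_image, ne_eq, hpk, hpk1, hn, not_false_eq_true,
    and_true]
  constructor
  · intro hx
    obtain ⟨a, d, ha, hd, rfl⟩ := exists_dvd_and_dvd_of_dvd_mul hx
    obtain ⟨j, hj, rfl⟩ := (Nat.dvd_prime_pow hp).mp ha
    rcases hj.lt_or_eq with hj | rfl
    · exact Or.inl (mul_dvd_mul (pow_dvd_pow p (by omega)) hd)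
    · exact Or.inr ⟨d, hd, rfl⟩
  · rintro (hx | ⟨d, hd, rfl⟩)
    · exact hx.trans (mul_dvd_mul_right (pow_dvd_pow p k.le_succ) n)
    · exact mul_dvd_mul_left _ hd

theorem Nat.disjoint_divisors_pow_mul_image {p n : ℕ} (hp : p.Prime) (hpn : ¬ p ∣ n)
    (k : ℕ) :
    Disjoint (p ^ k * n).divisors (n.divisors.image (p ^ (k + 1) * ·)) := by
  refine disjoint_right.mpr ?_
  rintro _ hx hx'
  obtain ⟨d, -, rfl⟩ := mem_image.mp hx
  have : p ^ k * p ∣ p ^ k * n :=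
    (pow_succ p k ▸ dvd_mul_right (p ^ (k + 1)) d).trans (Nat.dvd_of_mem_divisors hx')
  exact hpn (Nat.dvd_of_mul_dvd_mul_left (pow_pos hp.pos k) this)

section Additive

variable {f : ℕ → ℕ} (hadd : ∀ a b : ℕ, Nat.Coprime a b → f (a * b) = f a + f b)
include hadd

variable
  (hcond : ∀ p k : ℕ, p.Prime → 1 ≤ k → f (p ^ k) ≤ 1 + ∑ i ∈ range k, f (p ^ i))
include hcond

theorem apply_prime_pow_succ_mul_le {p n d : ℕ} (hp : p.Prime) (hpn : ¬ p ∣ n)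
    (hd : d ∈ n.divisors) (k : ℕ) : f (p ^ (k + 1) * d) ≤ 1 + Sf f (p ^ k * n) := by
  obtain ⟨hdn, hn⟩ := Nat.mem_divisors.mp hd
  have hcop (i : ℕ) : Nat.Coprime (p ^ i) d :=
    (hp.coprime_pow_of_not_dvd fun hpd => hpn (hpd.trans hdn)).symm
  have hinj : Set.InjOn (fun i => p ^ i * d) (range (k + 1)) := fun i _ j _ hij =>
    Nat.pow_right_injective hp.two_le (Nat.eq_of_mul_eq_mul_right (Nat.pos_of_mem_divisors hd) hij)
  have hsub : (range (k + 1)).image (fun i => p ^ i * d) ⊆ (p ^ k * n).divisors := by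
    intro x hx
    obtain ⟨i, hi, rfl⟩ := mem_image.mp hx
    have hik : i ≤ k := Nat.lt_succ_iff.mp (mem_range.mp hi)
    exact Nat.mem_divisors.mpr ⟨mul_dvd_mul (pow_dvd_pow p hik) hdn, by positivity [hp.pos]⟩
  calc f (p ^ (k + 1) * d)
      = f (p ^ (k + 1)) + f d := hadd _ _ (hcop _)
    _ ≤ 1 + ∑ i ∈ range (k + 1), f (p ^ i) + (k + 1) * f d := by
        gcongr
        · exact hcond p (k + 1) hp k.succ_pos
        · exact Nat.le_mul_of_pos_left _ k.succ_pos
    _ = 1 + ∑ i ∈ range (k + 1), f (p ^ i * d) := by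
        simp [hadd _ _ (hcop _), sum_add_distrib, add_assoc]
    _ = 1 + ∑ x ∈ (range (k + 1)).image (fun i => p ^ i * d), f x := by rw [sum_image hinj]
    _ ≤ 1 + Sf f (p ^ k * n) := by gcongr; exact sum_le_sum_of_subset hsub

theorem SubsetSumComplete.divisors_prime_pow_mul {p n : ℕ} (hp : p.Prime) (hpn : ¬ p ∣ n)
    (h : SubsetSumComplete f n.divisors) (k : ℕ) : SubsetSumComplete f (p ^ k * n).divisors := by
  induction k with
  | zero => simpa using h
  | succ k ih =>
    rw [Nat.divisors_prime_pow_succ_mul hp (by rintro rfl; exact hpn (dvd_zero p))]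
    refine ih.union ?_ (Nat.disjoint_divisors_pow_mul_image hp hpn k)
    intro _ hx
    obtain ⟨d, hd, rfl⟩ := mem_image.mp hx
    exact apply_prime_pow_succ_mul_le hadd hcond hp hpn hd k

theorem subsetSumComplete_divisors (hf1 : f 1 = 0) (n : ℕ) (hn : n ≠ 0) :
    SubsetSumComplete f n.divisors := by
  induction n using Nat.strong_induction_on with
  | _ n ih =>
    obtain rfl | hn1 := eq_or_ne n 1
    · exact subsetSumComplete_divisors_one hf1
    set p := n.minFac
    have hp : p.Prime := Nat.minFac_prime hn1
    obtain ⟨e, n', hpn', hnpn'⟩ := Nat.exists_eq_pow_mul_and_not_dvd hn p hp.ne_one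
    have hn' : n' ≠ 0 := by rintro rfl; exact hpn' (dvd_zero p)
    have he : e ≠ 0 := by
      rintro rfl
      have hpn : p ∣ n := Nat.minFac_dvd n
      rw [hnpn', pow_zero, one_mul] at hpn
      exact hpn' hpn
    have hlt : n' < n := by
      rw [hnpn']
      exact lt_mul_left (Nat.pos_of_ne_zero hn') (Nat.one_lt_pow he hp.one_lt)
    rw [hnpn']
    exact (ih n' hlt hn').divisors_prime_pow_mul hadd hcond hp hpn' e

end Additive

theorem FPractical.apply_prime_pow_succ_le_s18 {f : ℕ → ℕ} {p k : ℕ}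
    (h : FPractical f (p ^ (k + 1))) (hp : p.Prime) :
    f (p ^ (k + 1)) ≤ 1 + ∑ i ∈ range (k + 1), f (p ^ i) := by
  by_contra! hlt
  have hS : Sf f (p ^ (k + 1)) = ∑ i ∈ range (k + 1), f (p ^ i) + f (p ^ (k + 1)) := by
    rw [Sf, Nat.sum_divisors_prime_pow hp, sum_range_succ]
  obtain ⟨D, hD, hDsum⟩ := h.2 (1 + ∑ i ∈ range (k + 1), f (p ^ i)) (by omega) (by omega)
  by_cases hpD : p ^ (k + 1) ∈ D
  · have := single_le_sum (fun d _ => Nat.zero_le (f d)) hpD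
    omega
  · rw [Nat.divisors_prime_pow_succ hp, subset_insert_iff_of_notMem hpD] at hD
    have := sum_le_sum_of_subset (f := f) hD
    rw [Nat.sum_divisors_prime_pow hp] at this
    omega

theorem stmt18_general (f : ℕ → ℕ) (hf1 : f 1 = 0)
    (hadd : ∀ a b : ℕ, Nat.Coprime a b → f (a * b) = f a + f b) :
    (∀ n : ℕ, 0 < n → FPractical f n) ↔
      ∀ p k : ℕ, p.Prime → 1 ≤ k →
        f (p ^ k) ≤ 1 + ∑ i ∈ Finset.range k, f (p ^ i) := by
  constructor
  · rintro H p (_ | k) hp hk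
    · omega
    · exact (H _ (pow_pos hp.pos _)).apply_prime_pow_succ_le_s18 hp
  · intro hcond n hn
    exact (subsetSumComplete_divisors hadd hcond hf1 n hn.ne').fPractical hn

/-- For additive f, every positive integer is f-practical iff
f(p^k) ≤ 1 + ∑_{i=0}^{k-1} f(p^i) for every prime p and k ≥ 1. -/
theorem stmt18 (f : ℕ → ℕ) (hf1 : f 1 = 0)
    (hadd : ∀ a b : ℕ, Nat.Coprime a b → f (a * b) = f a + f b)
    (hfp : ∀ p : ℕ, p.Prime → 1 ≤ f p)
    (hmono : ∀ p k : ℕ, p.Prime → 1 ≤ k → f (p ^ (k - 1)) ≤ f (p ^ k)) :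
    (∀ n : ℕ, 0 < n → FPractical f n) ↔
      ∀ p k : ℕ, p.Prime → 1 ≤ k →
        f (p ^ k) ≤ 1 + ∑ i ∈ Finset.range k, f (p ^ i) :=
  stmt18_general f hf1 hadd
end
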